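/- arXiv:2405.04505 — 7 statements merged into one kernel-verified Lean document; each statement's English description precedes it below -/
import Mathlib

section
/- Let A be an n×n real matrix with all entries nonnegative. Then the spectral radius of A is strictly less than 1 if and only if there exists a vector v ∈ ℝⁿ with every component strictly positive such that every component of Av is strictly less than the corresponding component of v. -/
open scoped ENNReal NNReal BigOperators

attribute [local instance] Matrix.linftyOpNormedRing Matrix.linftyOpNormedAlgebra

private lemma pow_entry_nonneg {n : ℕ} (A : Matrix (Fin n) (Fin n) ℝ)
    (hA : ∀ i j, 0 ≤ A i j) (k : ℕ) : ∀ i j, 0 ≤ (A ^ k) i j := by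
  induction k with
  | zero => intro i j; simp [Matrix.one_apply]; split <;> norm_num
  | succ k ih =>
    intro i j
    rw [pow_succ, Matrix.mul_apply]
    exact Finset.sum_nonneg fun l _ => mul_nonneg (ih i l) (hA l j)

private lemma eig_vec {n : ℕ} (B : Matrix (Fin n) (Fin n) ℂ) (μ : ℂ) (h : μ ∈ spectrum ℂ B) :
    ∃ x : Fin n → ℂ, x ≠ 0 ∧ B.mulVec x = μ • x := by
  rw [← AlgEquiv.spectrum_eq (Matrix.toLinAlgEquiv' (R := ℂ) (n := Fin n))] at h
  rw [← Module.End.hasEigenvalue_iff_mem_spectrum] at h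
  obtain ⟨x, hx⟩ := h.exists_hasEigenvector
  exact ⟨x, hx.2, hx.apply_eq_smul⟩

private lemma gelfand_step {n : ℕ} [NeZero n] (B : Matrix (Fin n) (Fin n) ℂ)
    (h : spectralRadius ℂ B < 1) : ∃ m : ℕ, 1 ≤ m ∧ ‖B ^ m‖ < 1 := by
  haveI : CompleteSpace (Matrix (Fin n) (Fin n) ℂ) := FiniteDimensional.complete ℂ _
  have hT := spectrum.pow_nnnorm_pow_one_div_tendsto_nhds_spectralRadius B
  have hev := hT.eventually_lt_const h
  rw [Filter.eventually_atTop] at hev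
  obtain ⟨k, hk⟩ := hev
  refine ⟨max k 1, le_max_right _ _, ?_⟩
  have h1 := hk (max k 1) (le_max_left _ _)
  have hpos : (0:ℝ) < 1 / (max k 1 : ℕ) := by positivity
  have h2 : (‖B ^ max k 1‖₊ : ℝ≥0∞) < 1 := by
    by_contra hcon
    push_neg at hcon
    have := ENNReal.rpow_le_rpow hcon hpos.le
    rw [ENNReal.one_rpow] at this
    exact absurd h1 (not_lt.2 this)
  have h3 : ‖B ^ max k 1‖₊ < 1 := by exact_mod_cast h2
  exact_mod_cast h3

noncomputable def specRad {n : ℕ} (A : Matrix (Fin n) (Fin n) ℝ) : ℝ :=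
  sSup {r : ℝ | ∃ μ : ℂ, μ ∈ spectrum ℂ (A.map (fun a : ℝ => (a : ℂ))) ∧ r = ‖μ‖}

theorem stmt_0 (n : ℕ) (A : Matrix (Fin n) (Fin n) ℝ)
    (hA : ∀ i j, 0 ≤ A i j) :
    specRad A < 1 ↔
      ∃ v : Fin n → ℝ, (∀ i, 0 < v i) ∧ ∀ i, A.mulVec v i < v i := by
  set B : Matrix (Fin n) (Fin n) ℂ := A.map (fun a : ℝ => (a : ℂ)) with hB
  rcases Nat.eq_zero_or_pos n with hn | hn
  · subst hn
    refine iff_of_true ?_ ⟨fun _ => 1, fun i => i.elim0, fun i => i.elim0⟩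
    have hempty : {r : ℝ | ∃ μ : ℂ, μ ∈ spectrum ℂ B ∧ r = ‖μ‖} = ∅ := by
      ext r
      simp only [Set.mem_setOf_eq, Set.mem_empty_iff_false, iff_false, not_exists]
      rintro μ ⟨hμ, -⟩
      exact (spectrum.mem_iff.mp hμ) (isUnit_of_subsingleton _)
    rw [specRad, ← hB, hempty, Real.sSup_empty]
    norm_num
  haveI : NeZero n := ⟨hn.ne'⟩
  have hBmap : ∀ (m : ℕ), B ^ m = (A ^ m).map (fun a : ℝ => (a : ℂ)) := by
    intro m
    have : B = (Complex.ofRealHom.mapMatrix : Matrix (Fin n) (Fin n) ℝ →+* Matrix (Fin n) (Fin n) ℂ) A := rfl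
    rw [this, ← map_pow]
    rfl
  constructor
  · -- forward
    intro hlt
    -- all eigenvalue moduli ≤ specRad
    have hbdd : ∀ μ ∈ spectrum ℂ B, (‖μ‖ : ℝ) ≤ specRad A := by
      intro μ hμ
      refine le_csSup ⟨‖B‖, ?_⟩ ⟨μ, hμ, rfl⟩
      rintro r ⟨ν, hν, rfl⟩
      simpa using spectrum.norm_le_norm_of_mem hν
    have hsr : spectralRadius ℂ B < 1 := by
      have : spectralRadius ℂ B < ((1 : ℝ≥0) : ℝ≥0∞) := by
        apply spectrum.spectralRadius_lt_of_forall_lt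
        intro μ hμ
        have : ‖μ‖ < 1 := by
          calc ‖μ‖ = ‖μ‖ := rfl
          _ ≤ specRad A := hbdd μ hμ
          _ < 1 := hlt
        exact_mod_cast this
      simpa using this
    obtain ⟨m, hm1, hmlt⟩ := gelfand_step B hsr
    -- row sums of A^m are < 1
    have hrow : ∀ i, (A ^ m).mulVec (fun _ => 1) i < 1 := by
      intro i
      have h1 : ∑ j, ‖(B ^ m) i j‖₊ ≤ ‖B ^ m‖₊ := by
        rw [Matrix.linfty_opNNNorm_def]
        exact Finset.le_sup (f := fun i => ∑ j, ‖(B ^ m) i j‖₊) (Finset.mem_univ i)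
      have h2 : (∑ j, ‖(B ^ m) i j‖ : ℝ) ≤ ‖B ^ m‖ := by
        have := (NNReal.coe_le_coe).mpr h1
        simpa [NNReal.coe_sum] using this
      have h3 : (A ^ m).mulVec (fun _ => 1) i = ∑ j, ‖(B ^ m) i j‖ := by
        rw [Matrix.mulVec]
        simp only [dotProduct, mul_one]
        refine Finset.sum_congr rfl fun j _ => ?_
        rw [hBmap m]
        simp only [Matrix.map_apply, Complex.norm_real, Real.norm_eq_abs]
        exact (abs_of_nonneg (pow_entry_nonneg A hA m i j)).symm
      calc (A ^ m).mulVec (fun _ => 1) i = ∑ j, ‖(B ^ m) i j‖ := h3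
        _ ≤ ‖B ^ m‖ := h2
        _ < 1 := hmlt
    -- construct v
    set w : ℕ → Fin n → ℝ := fun k => (A ^ k).mulVec (fun _ => 1) with hw
    have hwnn : ∀ k i, 0 ≤ w k i := by
      intro k i
      simp only [hw, Matrix.mulVec, dotProduct]
      exact Finset.sum_nonneg fun j _ => mul_nonneg (pow_entry_nonneg A hA k i j) zero_le_one
    set v : Fin n → ℝ := ∑ k ∈ Finset.range m, w k with hv
    have hw0 : w 0 = fun _ => 1 := by
      funext i
      simp [hw, Matrix.mulVec, dotProduct, Matrix.one_apply]
    have hvpos : ∀ i, 0 < v i := by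
      intro i
      have : (1:ℝ) ≤ v i := by
        rw [hv]
        have : v i = ∑ k ∈ Finset.range m, w k i := by
          rw [hv]; simp [Finset.sum_apply]
        rw [← hv, this]
        calc (1:ℝ) = w 0 i := by rw [hw0]
          _ ≤ ∑ k ∈ Finset.range m, w k i :=
            Finset.single_le_sum (fun k _ => hwnn k i) (Finset.mem_range.mpr hm1)
      linarith
    refine ⟨v, hvpos, fun i => ?_⟩
    have hAv : A.mulVec v = ∑ k ∈ Finset.range m, w (k + 1) := by
      have := map_sum (A.mulVecLin) w (Finset.range m)
      calc A.mulVec v = A.mulVecLin v := rfl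
        _ = ∑ k ∈ Finset.range m, A.mulVecLin (w k) := by rw [hv, this]
        _ = ∑ k ∈ Finset.range m, w (k + 1) := by
            refine Finset.sum_congr rfl fun k _ => ?_
            show A.mulVec ((A ^ k).mulVec (fun _ => 1)) = (A ^ (k+1)).mulVec (fun _ => 1)
            rw [Matrix.mulVec_mulVec, ← pow_succ']
    have hshift : ∑ k ∈ Finset.range m, w (k + 1) = v + w m - w 0 := by
      rw [hv, eq_sub_iff_add_eq, ← Finset.sum_range_succ' w m, Finset.sum_range_succ]
    rw [hAv, hshift]
    have : w m i < 1 := hrow i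
    have hw0i : w 0 i = 1 := by rw [hw0]
    simp only [Pi.sub_apply, Pi.add_apply]
    rw [hw0i]
    linarith
  · -- backward
    rintro ⟨v, hvpos, hAv⟩
    haveI : Nonempty (Fin n) := ⟨⟨0, hn⟩⟩
    set θ : ℝ := Finset.univ.sup' Finset.univ_nonempty (fun i => A.mulVec v i / v i) with hθ
    have hθ1 : θ < 1 := by
      rw [hθ, Finset.sup'_lt_iff]
      intro i _
      exact div_lt_one (hvpos i) |>.mpr (hAv i)
    have hmulnn : ∀ i, 0 ≤ A.mulVec v i := by
      intro i
      simp only [Matrix.mulVec, dotProduct]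
      exact Finset.sum_nonneg fun j _ => mul_nonneg (hA i j) (hvpos j).le
    have hθ0 : 0 ≤ θ := by
      have := Finset.le_sup' (fun i => A.mulVec v i / v i) (Finset.mem_univ (Classical.arbitrary (Fin n)))
      have h0 : 0 ≤ A.mulVec v (Classical.arbitrary (Fin n)) / v (Classical.arbitrary (Fin n)) :=
        div_nonneg (hmulnn _) (hvpos _).le
      linarith
    have hθv : ∀ i, A.mulVec v i ≤ θ * v i := by
      intro i
      have := Finset.le_sup' (fun i => A.mulVec v i / v i) (Finset.mem_univ i)
      calc A.mulVec v i = (A.mulVec v i / v i) * v i := by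
            rw [div_mul_cancel₀ _ (hvpos i).ne']
        _ ≤ θ * v i := by
            apply mul_le_mul_of_nonneg_right this (hvpos i).le
    have key : ∀ μ ∈ spectrum ℂ B, ‖μ‖ ≤ θ := by
      intro μ hμ
      obtain ⟨x, hx0, hx⟩ := eig_vec B μ hμ
      set g : Fin n → ℝ := fun j => ‖x j‖ with hg
      obtain ⟨i₀, -, hi₀⟩ := Finset.exists_max_image (Finset.univ : Finset (Fin n))
        (fun j => g j / v j) Finset.univ_nonempty
      set c : ℝ := g i₀ / v i₀ with hc
      have hcpos : 0 < c := by
        obtain ⟨j, hj⟩ := Function.ne_iff.mp hx0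
        have hgj : 0 < g j := by
          simp only [hg]
          exact norm_pos_iff.mpr hj
        have : 0 < g j / v j := div_pos hgj (hvpos j)
        exact lt_of_lt_of_le this (hi₀ j (Finset.mem_univ j))
      have hgle : ∀ j, g j ≤ c * v j := by
        intro j
        have := hi₀ j (Finset.mem_univ j)
        calc g j = (g j / v j) * v j := by rw [div_mul_cancel₀ _ (hvpos j).ne']
          _ ≤ c * v j := mul_le_mul_of_nonneg_right this (hvpos j).le
      have hgi₀ : g i₀ = c * v i₀ := by rw [hc, div_mul_cancel₀ _ (hvpos i₀).ne']
      have hmain : ‖μ‖ * g i₀ ≤ c * θ * v i₀ := by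
        have h1 : ‖μ‖ * g i₀ = ‖(B.mulVec x) i₀‖ := by
          rw [hx]
          simp [hg, map_mul]
        have h2 : ‖(B.mulVec x) i₀‖ ≤ ∑ j, A i₀ j * g j := by
          simp only [Matrix.mulVec, dotProduct]
          refine (norm_sum_le _ _).trans ?_
          refine Finset.sum_le_sum fun j _ => ?_
          rw [hB]
          simp only [Matrix.map_apply, norm_mul, Complex.norm_real, Real.norm_eq_abs]
          rw [abs_of_nonneg (hA i₀ j)]
        have h3 : ∑ j, A i₀ j * g j ≤ ∑ j, A i₀ j * (c * v j) :=
          Finset.sum_le_sum fun j _ => mul_le_mul_of_nonneg_left (hgle j) (hA i₀ j)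
        have h4 : ∑ j, A i₀ j * (c * v j) = c * A.mulVec v i₀ := by
          simp only [Matrix.mulVec, dotProduct, Finset.mul_sum]
          exact Finset.sum_congr rfl fun j _ => by ring
        have h5 : c * A.mulVec v i₀ ≤ c * (θ * v i₀) :=
          mul_le_mul_of_nonneg_left (hθv i₀) hcpos.le
        calc ‖μ‖ * g i₀ = ‖(B.mulVec x) i₀‖ := h1
          _ ≤ ∑ j, A i₀ j * g j := h2
          _ ≤ ∑ j, A i₀ j * (c * v j) := h3
          _ = c * A.mulVec v i₀ := h4
          _ ≤ c * (θ * v i₀) := h5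
          _ = c * θ * v i₀ := by ring
      rw [hgi₀] at hmain
      have hcv : 0 < c * v i₀ := mul_pos hcpos (hvpos i₀)
      nlinarith [hmain, hcv]
    have : specRad A ≤ θ := by
      apply Real.sSup_le _ hθ0
      rintro r ⟨μ, hμ, rfl⟩
      exact key μ hμ
    linarith
end

section
/- In the metapopulation model, suppose max_{i ∈ {1,…,n}} g_i(0) < 1. Then the extinction equilibrium x* = 0 is a locally asymptotically stable fixed point of F: F(0) = 0; for every ε > 0 there exists δ > 0 such that every x₀ ∈ ℝ₊ⁿ with ‖x₀‖₁ < δ satisfies ‖Fᵗ(x₀)‖₁ < ε for all t ≥ 0; and there exists R > 0 such that for every x₀ ∈ ℝ₊ⁿ with ‖x₀‖₁ < R the iterates Fᵗ(x₀) converge to 0 as t → ∞. -/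
theorem stmt_3 (n : ℕ) (hn : 0 < n)
    (g : Fin n → ℝ → ℝ)
    (hg_smooth : ∀ i, ContDiff ℝ 1 (g i))
    (hg_pos : ∀ i, ∀ x : ℝ, 0 ≤ x → 0 < g i x)
    (m : Fin n → ℝ) (hm_nonneg : ∀ i, 0 ≤ m i)
    (hf_bdd : ∀ i, ∀ x : ℝ, 0 ≤ x → g i x * x ≤ m i)
    (d : Fin n → Fin n → ℝ → ℝ)
    (hd_smooth : ∀ i j, ContDiff ℝ 1 (d i j))
    (hd_pos : ∀ i j, ∀ x : ℝ, 0 ≤ x → 0 < d i j x)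
    (hd_lt1 : ∀ i j, ∀ x : ℝ, 0 ≤ x → d i j x < 1)
    (hd_colsum : ∀ i, ∀ x : ℝ, 0 ≤ x → (∑ j, d j i x) < 1)
    (F : (Fin n → ℝ) → (Fin n → ℝ))
    (hF : ∀ x : Fin n → ℝ, ∀ i, F x i = ∑ j, d i j (x j) * (g j (x j) * x j))
    (hmax : Finset.univ.sup' (Finset.univ_nonempty_iff.mpr (Fin.pos_iff_nonempty.mp hn)) (fun i => g i 0) < 1) :
    F 0 = 0 ∧
    (∀ ε : ℝ, 0 < ε → ∃ δ : ℝ, 0 < δ ∧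
      ∀ x₀ : Fin n → ℝ, (∀ i, 0 ≤ x₀ i) → (∑ i, |x₀ i|) < δ →
        ∀ t : ℕ, (∑ i, |(F^[t] x₀) i|) < ε) ∧
    (∃ R : ℝ, 0 < R ∧
      ∀ x₀ : Fin n → ℝ, (∀ i, 0 ≤ x₀ i) → (∑ i, |x₀ i|) < R →
        Filter.Tendsto (fun t => F^[t] x₀) Filter.atTop (nhds 0)) := by
  have hne : (Finset.univ : Finset (Fin n)).Nonempty :=
    Finset.univ_nonempty_iff.mpr (Fin.pos_iff_nonempty.mp hn)
  set M : ℝ := Finset.univ.sup' hne (fun i => g i 0) with hM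
  -- choose an index to see M > 0
  obtain ⟨i₀⟩ := Fin.pos_iff_nonempty.mp hn
  have hM0 : 0 < M := lt_of_lt_of_le (hg_pos i₀ 0 le_rfl)
    (Finset.le_sup' (fun i => g i 0) (Finset.mem_univ i₀))
  set c : ℝ := (M + 1) / 2 with hc
  have hc0 : 0 < c := by positivity
  have hc1 : c < 1 := by simp only [hc]; linarith
  have hgc : ∀ i, g i 0 < c := by
    intro i
    have : g i 0 ≤ M := Finset.le_sup' (fun i => g i 0) (Finset.mem_univ i)
    simp only [hc]; linarith
  -- δ i : near 0, g i < c
  have hδ : ∀ i : Fin n, ∃ δ > 0, ∀ y : ℝ, |y| < δ → g i y < c := by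
    intro i
    have hcont : ContinuousAt (g i) 0 := (hg_smooth i).continuous.continuousAt
    have hev : ∀ᶠ y in nhds (0:ℝ), g i y < c :=
      hcont.eventually_lt continuousAt_const (hgc i)
    rw [Metric.eventually_nhds_iff] at hev
    obtain ⟨δ, hδ0, hδ⟩ := hev
    exact ⟨δ, hδ0, fun y hy => hδ (by simpa [Real.dist_eq] using hy)⟩
  choose δ hδ0 hδlt using hδ
  set δ₀ : ℝ := (Finset.univ.inf' hne δ) / 2 with hδ₀def
  have hδ₀pos : 0 < δ₀ := by
    have : 0 < Finset.univ.inf' hne δ := by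
      rw [Finset.lt_inf'_iff]; intro i _; exact hδ0 i
    simpa [hδ₀def] using half_pos this
  have hinfpos : 0 < Finset.univ.inf' hne δ := by
    rw [Finset.lt_inf'_iff]; intro j _; exact hδ0 j
  have hδ₀lt : ∀ i, δ₀ < δ i := by
    intro i
    have h1 : Finset.univ.inf' hne δ ≤ δ i := Finset.inf'_le δ (Finset.mem_univ i)
    have h2 : δ₀ < Finset.univ.inf' hne δ := by
      simpa [hδ₀def] using half_lt_self hinfpos
    linarith
  -- key step lemma
  have key : ∀ x : Fin n → ℝ, (∀ i, 0 ≤ x i) → (∑ i, x i) ≤ δ₀ →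
      (∀ i, 0 ≤ F x i) ∧ (∑ i, F x i) ≤ c * ∑ i, x i := by
    intro x hx hsum
    have hxle : ∀ j, x j ≤ δ₀ := by
      intro j
      calc x j ≤ ∑ i, x i := Finset.single_le_sum (fun i _ => hx i) (Finset.mem_univ j)
        _ ≤ δ₀ := hsum
    have hgle : ∀ j, g j (x j) ≤ c := by
      intro j
      apply le_of_lt
      apply hδlt j
      rw [abs_of_nonneg (hx j)]
      exact lt_of_le_of_lt (hxle j) (hδ₀lt j)
    constructor
    · intro i
      rw [hF]
      apply Finset.sum_nonneg
      intro j _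
      have hd' := hd_pos i j (x j) (hx j)
      have hg' := hg_pos j (x j) (hx j)
      have hx' := hx j
      positivity
    · have hrw : (∑ i, F x i) = ∑ j, (∑ i, d i j (x j)) * (g j (x j) * x j) := by
        simp only [hF]
        rw [Finset.sum_comm]
        congr 1; ext j
        rw [Finset.sum_mul]
      rw [hrw]
      rw [Finset.mul_sum]
      apply Finset.sum_le_sum
      intro j _
      have hfj : 0 ≤ g j (x j) * x j := by
        have hg' := hg_pos j (x j) (hx j)
        have hx' := hx j
        positivity
      calc (∑ i, d i j (x j)) * (g j (x j) * x j) ≤ 1 * (g j (x j) * x j) :=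
            mul_le_mul_of_nonneg_right (le_of_lt (hd_colsum j (x j) (hx j))) hfj
        _ = g j (x j) * x j := one_mul _
        _ ≤ c * x j := mul_le_mul_of_nonneg_right (hgle j) (hx j)
  -- iterates
  have iter : ∀ x₀ : Fin n → ℝ, (∀ i, 0 ≤ x₀ i) → (∑ i, x₀ i) ≤ δ₀ →
      ∀ t : ℕ, (∀ i, 0 ≤ F^[t] x₀ i) ∧ (∑ i, F^[t] x₀ i) ≤ c ^ t * ∑ i, x₀ i := by
    intro x₀ hx₀ hsum
    have hS0 : 0 ≤ ∑ i, x₀ i := Finset.sum_nonneg (fun i _ => hx₀ i)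
    intro t
    induction t with
    | zero =>
      simp only [Function.iterate_zero, id_eq, pow_zero, one_mul]
      exact ⟨hx₀, le_rfl⟩
    | succ t ih =>
      obtain ⟨hpos, hle⟩ := ih
      have hct : c ^ t ≤ 1 := pow_le_one₀ hc0.le hc1.le
      have hsum' : (∑ i, F^[t] x₀ i) ≤ δ₀ := by
        calc (∑ i, F^[t] x₀ i) ≤ c ^ t * ∑ i, x₀ i := hle
          _ ≤ 1 * ∑ i, x₀ i := mul_le_mul_of_nonneg_right hct hS0
          _ = ∑ i, x₀ i := one_mul _
          _ ≤ δ₀ := hsum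
      obtain ⟨h1, h2⟩ := key (F^[t] x₀) hpos hsum'
      rw [Function.iterate_succ_apply']
      refine ⟨h1, ?_⟩
      calc (∑ i, F (F^[t] x₀) i) ≤ c * ∑ i, F^[t] x₀ i := h2
        _ ≤ c * (c ^ t * ∑ i, x₀ i) := mul_le_mul_of_nonneg_left hle hc0.le
        _ = c ^ (t + 1) * ∑ i, x₀ i := by ring
  refine ⟨?_, ?_, ?_⟩
  · funext i
    rw [hF]
    simp
  · intro ε hε
    refine ⟨min δ₀ ε, lt_min hδ₀pos hε, ?_⟩
    intro x₀ hx₀ hlt t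
    have habs : ∀ y : Fin n → ℝ, (∀ i, 0 ≤ y i) → (∑ i, |y i|) = ∑ i, y i := by
      intro y hy
      exact Finset.sum_congr rfl (fun i _ => abs_of_nonneg (hy i))
    rw [habs x₀ hx₀] at hlt
    have hsum : (∑ i, x₀ i) ≤ δ₀ := le_of_lt (lt_of_lt_of_le hlt (min_le_left _ _))
    obtain ⟨hpos, hle⟩ := iter x₀ hx₀ hsum t
    rw [habs _ hpos]
    have hct : c ^ t ≤ 1 := pow_le_one₀ hc0.le hc1.le
    have hS0 : 0 ≤ ∑ i, x₀ i := Finset.sum_nonneg (fun i _ => hx₀ i)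
    calc (∑ i, F^[t] x₀ i) ≤ c ^ t * ∑ i, x₀ i := hle
      _ ≤ 1 * ∑ i, x₀ i := mul_le_mul_of_nonneg_right hct hS0
      _ = ∑ i, x₀ i := one_mul _
      _ < ε := lt_of_lt_of_le hlt (min_le_right _ _)
  · refine ⟨δ₀, hδ₀pos, ?_⟩
    intro x₀ hx₀ hlt
    have habs : (∑ i, |x₀ i|) = ∑ i, x₀ i :=
      Finset.sum_congr rfl (fun i _ => abs_of_nonneg (hx₀ i))
    rw [habs] at hlt
    have hsum : (∑ i, x₀ i) ≤ δ₀ := hlt.le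
    rw [tendsto_pi_nhds]
    intro i
    simp only [Pi.zero_apply]
    apply squeeze_zero (fun t => (iter x₀ hx₀ hsum t).1 i)
    · intro t
      obtain ⟨hpos, hle⟩ := iter x₀ hx₀ hsum t
      calc F^[t] x₀ i ≤ ∑ j, F^[t] x₀ j :=
            Finset.single_le_sum (fun j _ => hpos j) (Finset.mem_univ i)
        _ ≤ c ^ t * ∑ j, x₀ j := hle
    · have : Filter.Tendsto (fun t : ℕ => c ^ t) Filter.atTop (nhds 0) :=
        tendsto_pow_atTop_nhds_zero_of_lt_one hc0.le hc1
      simpa using this.mul_const (∑ j, x₀ j)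
end

section
/- In the metapopulation model, assume additionally that: (i) for each i, d_{ii}(x) = d_i is constant in x, with d_i ∈ (0,1); (ii) each g_i is strictly decreasing on [0,∞) and each d_{ij} with i ≠ j is strictly decreasing on [0,∞); and (iii) ρ(A(0)) < 1. Then the extinction equilibrium x* = 0 is globally asymptotically stable: for every x₀ ∈ ℝ₊ⁿ the iterates Fᵗ(x₀) converge to 0 as t → ∞, and for every ε > 0 there exists δ > 0 such that every x₀ ∈ ℝ₊ⁿ with ‖x₀‖₁ < δ satisfies ‖Fᵗ(x₀)‖₁ < ε for all t ≥ 0. -/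
section Aux

open Filter Topology

attribute [local instance] Matrix.linftyOpNormedRing Matrix.linftyOpNormedAlgebra

theorem aux_entry_tendsto {n : ℕ} (hn : 0 < n) (B : Matrix (Fin n) (Fin n) ℝ)
    (h : specRad B < 1) :
    Tendsto (fun t => ∑ i, ∑ j, |(B ^ t) i j|) atTop (𝓝 0) := by
  haveI : Nonempty (Fin n) := Fin.pos_iff_nonempty.mp hn
  set C : Matrix (Fin n) (Fin n) ℂ := B.map (fun a : ℝ => (a : ℂ)) with hCdef
  have hfin : {r : ℝ | ∃ μ : ℂ, μ ∈ spectrum ℂ C ∧ r = ‖μ‖}.Finite := by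
    have h1 := (Matrix.finite_spectrum C).image (fun μ : ℂ => ‖μ‖)
    refine h1.subset ?_
    rintro r ⟨μ, hμ, rfl⟩
    exact ⟨μ, hμ, rfl⟩
  obtain ⟨z, hz, hzρ⟩ := spectrum.exists_nnnorm_eq_spectralRadius C
  have hz1 : ‖z‖ < 1 := by
    have hle : ‖z‖ ≤ specRad B := le_csSup hfin.bddAbove ⟨z, hz, rfl⟩
    calc ‖z‖ = ‖z‖ := rfl
    _ ≤ specRad B := hle
    _ < 1 := h
  have hρ1 : spectralRadius ℂ C < 1 := by
    rw [← hzρ, ← ENNReal.coe_one, ENNReal.coe_lt_coe]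
    exact_mod_cast hz1
  obtain ⟨r, hρr, hr1⟩ := exists_between hρ1
  have hrtop : r ≠ ⊤ := ne_top_of_lt hr1
  set r₀ : NNReal := r.toNNReal with hr₀def
  have hrr₀ : r = (r₀ : ENNReal) := (ENNReal.coe_toNNReal hrtop).symm
  have hr₀1 : r₀ < 1 := by
    rw [hrr₀, ← ENNReal.coe_one, ENNReal.coe_lt_coe] at hr1
    exact hr1
  have hgel := spectrum.pow_nnnorm_pow_one_div_tendsto_nhds_spectralRadius C
  have hev : ∀ᶠ t : ℕ in atTop, ((‖C ^ t‖₊ : ENNReal)) ^ (1 / (t : ℝ)) < r :=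
    hgel.eventually (isOpen_Iio.eventually_mem hρr)
  have hev2 : ∀ᶠ t : ℕ in atTop, ‖C ^ t‖ ≤ (r₀ : ℝ) ^ t := by
    filter_upwards [hev, eventually_ge_atTop 1] with t ht ht1
    have htpos : (0 : ℝ) < t := by exact_mod_cast ht1
    have h2 := ENNReal.rpow_lt_rpow ht htpos
    rw [← ENNReal.rpow_mul, one_div_mul_cancel (ne_of_gt htpos), ENNReal.rpow_one] at h2
    rw [hrr₀] at h2
    have h4 : (‖C ^ t‖₊ : ENNReal) < ((r₀ : ENNReal)) ^ t := by
      rw [← ENNReal.rpow_natCast]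
      exact h2
    rw [← ENNReal.coe_pow, ENNReal.coe_lt_coe] at h4
    exact_mod_cast h4.le
  have hnorm0 : Tendsto (fun t => ‖C ^ t‖) atTop (𝓝 0) := by
    refine squeeze_zero' (Eventually.of_forall fun t => norm_nonneg _) hev2 ?_
    exact tendsto_pow_atTop_nhds_zero_of_lt_one r₀.coe_nonneg (by exact_mod_cast hr₀1)
  have hentry : ∀ (t : ℕ) (i j : Fin n), |(B ^ t) i j| ≤ ‖C ^ t‖ := by
    intro t i j
    have hpow : C ^ t = (B ^ t).map (fun a : ℝ => (a : ℂ)) := by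
      have h1 : C = Complex.ofRealHom.mapMatrix B := rfl
      rw [h1, ← map_pow]
      rfl
    have h1 : |(B ^ t) i j| = ‖(C ^ t) i j‖ := by
      rw [hpow]
      simp [Matrix.map_apply, Real.norm_eq_abs]
    have s1 : ‖(C ^ t) i j‖ ≤ ∑ k, ‖(C ^ t) i k‖ :=
      Finset.single_le_sum (fun k _ => norm_nonneg _) (Finset.mem_univ j)
    have s2 : (∑ k, ‖(C ^ t) i k‖) = ((∑ k, ‖(C ^ t) i k‖₊ : NNReal) : ℝ) := by
      push_cast
      rfl
    have s3 : ((∑ k, ‖(C ^ t) i k‖₊ : NNReal) : ℝ) ≤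
        (((Finset.univ : Finset (Fin n)).sup fun i => ∑ k, ‖(C ^ t) i k‖₊ : NNReal) : ℝ) := by
      exact_mod_cast Finset.le_sup (f := fun i => ∑ k, ‖(C ^ t) i k‖₊) (Finset.mem_univ i)
    rw [h1, Matrix.linfty_opNorm_def]
    exact le_trans s1 (le_trans (le_of_eq s2) s3)
  have hb : ∀ t : ℕ, ∑ i, ∑ j, |(B ^ t) i j| ≤ ((n : ℝ) * n) * ‖C ^ t‖ := by
    intro t
    have s1 : ∑ i, ∑ j, |(B ^ t) i j| ≤ ∑ _i : Fin n, ∑ _j : Fin n, ‖C ^ t‖ :=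
      Finset.sum_le_sum fun i _ => Finset.sum_le_sum fun j _ => hentry t i j
    have s2 : (∑ _i : Fin n, ∑ _j : Fin n, ‖C ^ t‖) = ((n : ℝ) * n) * ‖C ^ t‖ := by
      simp [Finset.sum_const, Finset.card_univ]
      ring
    exact le_trans s1 (le_of_eq s2)
  refine squeeze_zero (fun t => Finset.sum_nonneg fun i _ =>
    Finset.sum_nonneg fun j _ => abs_nonneg _) hb ?_
  simpa using hnorm0.const_mul ((n : ℝ) * n)

end Aux

theorem stmt_5 (n : ℕ) (hn : 0 < n)
    (g : Fin n → ℝ → ℝ)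
    (hg_smooth : ∀ i, ContDiff ℝ 1 (g i))
    (hg_pos : ∀ i, ∀ x : ℝ, 0 ≤ x → 0 < g i x)
    (m : Fin n → ℝ) (hm_nonneg : ∀ i, 0 ≤ m i)
    (hf_bdd : ∀ i, ∀ x : ℝ, 0 ≤ x → g i x * x ≤ m i)
    (d : Fin n → Fin n → ℝ → ℝ)
    (hd_smooth : ∀ i j, ContDiff ℝ 1 (d i j))
    (hd_pos : ∀ i j, ∀ x : ℝ, 0 ≤ x → 0 < d i j x)
    (hd_lt1 : ∀ i j, ∀ x : ℝ, 0 ≤ x → d i j x < 1)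
    (hd_colsum : ∀ i, ∀ x : ℝ, 0 ≤ x → (∑ j, d j i x) < 1)
    (F : (Fin n → ℝ) → (Fin n → ℝ))
    (hF : ∀ x : Fin n → ℝ, ∀ i, F x i = ∑ j, d i j (x j) * (g j (x j) * x j))
    (A0 : Matrix (Fin n) (Fin n) ℝ)
    (hA0 : ∀ i j, A0 i j = d i j 0 * g j 0)
    (hd_const : ∀ i, ∀ x : ℝ, d i i x = d i i 0)
    (hg_anti : ∀ i, StrictAntiOn (g i) (Set.Ici 0))
    (hd_anti : ∀ i j, i ≠ j → StrictAntiOn (d i j) (Set.Ici 0))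
    (hρ : specRad A0 < 1) :
    (∀ x₀ : Fin n → ℝ, (∀ i, 0 ≤ x₀ i) →
      Filter.Tendsto (fun t => F^[t] x₀) Filter.atTop (nhds 0)) ∧
    (∀ ε : ℝ, 0 < ε → ∃ δ : ℝ, 0 < δ ∧
      ∀ x₀ : Fin n → ℝ, (∀ i, 0 ≤ x₀ i) → (∑ i, |x₀ i|) < δ →
        ∀ t : ℕ, (∑ i, |(F^[t] x₀) i|) < ε) := by
  have hxle : ∀ x : Fin n → ℝ, (∀ i, 0 ≤ x i) →
      ∀ i j, d i j (x j) * (g j (x j) * x j) ≤ A0 i j * x j := by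
    intro x hx i j
    have hxj := hx j
    have hd_le : d i j (x j) ≤ d i j 0 := by
      rcases eq_or_ne i j with rfl | hij
      · exact (hd_const i (x i)).le
      · exact (hd_anti i j hij).antitoneOn (Set.mem_Ici.mpr le_rfl)
          (Set.mem_Ici.mpr hxj) hxj
    have hg_le : g j (x j) ≤ g j 0 :=
      (hg_anti j).antitoneOn (Set.mem_Ici.mpr le_rfl) (Set.mem_Ici.mpr hxj) hxj
    have hdpos := hd_pos i j 0 le_rfl
    have hgpos := hg_pos j (x j) hxj
    rw [hA0 i j]
    have s1 : d i j (x j) * (g j (x j) * x j) ≤ d i j 0 * (g j 0 * x j) :=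
      mul_le_mul hd_le (mul_le_mul_of_nonneg_right hg_le hxj)
        (mul_nonneg hgpos.le hxj) hdpos.le
    calc d i j (x j) * (g j (x j) * x j) ≤ d i j 0 * (g j 0 * x j) := s1
    _ = d i j 0 * g j 0 * x j := (mul_assoc _ _ _).symm
  have hFnn : ∀ x : Fin n → ℝ, (∀ i, 0 ≤ x i) → ∀ i, 0 ≤ F x i := by
    intro x hx i
    rw [hF]
    exact Finset.sum_nonneg fun j _ => mul_nonneg (hd_pos i j (x j) (hx j)).le
      (mul_nonneg (hg_pos j (x j) (hx j)).le (hx j))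
  have hFle : ∀ x : Fin n → ℝ, (∀ i, 0 ≤ x i) → ∀ i, F x i ≤ (A0.mulVec x) i := by
    intro x hx i
    rw [hF]
    simp only [Matrix.mulVec, dotProduct]
    exact Finset.sum_le_sum fun j _ => hxle x hx i j
  have hA0nn : ∀ i j, 0 ≤ A0 i j := fun i j => by
    rw [hA0]
    exact mul_nonneg (hd_pos i j 0 le_rfl).le (hg_pos j 0 le_rfl).le
  have hPnn : ∀ (t : ℕ) (i j : Fin n), 0 ≤ (A0 ^ t) i j := by
    intro t
    induction t with
    | zero =>
      intro i j
      rcases eq_or_ne i j with rfl | hij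
      · simp [Matrix.one_apply]
      · simp [Matrix.one_apply, hij]
    | succ t ih =>
      intro i j
      rw [pow_succ, Matrix.mul_apply]
      exact Finset.sum_nonneg fun k _ => mul_nonneg (ih i k) (hA0nn k j)
  have hiter : ∀ x₀ : Fin n → ℝ, (∀ i, 0 ≤ x₀ i) → ∀ t : ℕ,
      (∀ i, 0 ≤ F^[t] x₀ i) ∧ (∀ i, F^[t] x₀ i ≤ ((A0 ^ t).mulVec x₀) i) := by
    intro x₀ hx₀ t
    induction t with
    | zero =>
      refine ⟨hx₀, fun i => ?_⟩
      simp [Matrix.one_mulVec]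
    | succ t ih =>
      obtain ⟨ihnn, ihle⟩ := ih
      have h1 : ∀ i, 0 ≤ F^[t + 1] x₀ i := by
        intro i
        rw [Function.iterate_succ_apply']
        exact hFnn _ ihnn i
      refine ⟨h1, fun i => ?_⟩
      rw [Function.iterate_succ_apply']
      calc F (F^[t] x₀) i ≤ (A0.mulVec (F^[t] x₀)) i := hFle _ ihnn i
      _ ≤ (A0.mulVec ((A0 ^ t).mulVec x₀)) i := by
        simp only [Matrix.mulVec, dotProduct]
        exact Finset.sum_le_sum fun j _ =>
          mul_le_mul_of_nonneg_left (ihle j) (hA0nn i j)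
      _ = ((A0 ^ (t + 1)).mulVec x₀) i := by
        rw [Matrix.mulVec_mulVec, ← pow_succ']
  have he0 := aux_entry_tendsto hn A0 hρ
  set e : ℕ → ℝ := fun t => ∑ i, ∑ j, |(A0 ^ t) i j| with hedef
  have hennneg : ∀ t, 0 ≤ e t := fun t =>
    Finset.sum_nonneg fun i _ => Finset.sum_nonneg fun j _ => abs_nonneg _
  have hee : ∀ (t : ℕ) (i j : Fin n), (A0 ^ t) i j ≤ e t := by
    intro t i j
    have s1 : (A0 ^ t) i j ≤ ∑ j', |(A0 ^ t) i j'| :=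
      le_trans (le_abs_self _)
        (Finset.single_le_sum (f := fun j' => |(A0 ^ t) i j'|) (fun k _ => abs_nonneg _) (Finset.mem_univ j))
    have s2 : (∑ j', |(A0 ^ t) i j'|) ≤ e t :=
      Finset.single_le_sum (f := fun i => ∑ j', |(A0 ^ t) i j'|)
        (fun k _ => Finset.sum_nonneg fun _ _ => abs_nonneg _) (Finset.mem_univ i)
    exact le_trans s1 s2
  have hcomp : ∀ x₀ : Fin n → ℝ, (∀ i, 0 ≤ x₀ i) → ∀ t i,
      F^[t] x₀ i ≤ e t * ∑ j, x₀ j := by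
    intro x₀ hx₀ t i
    refine le_trans ((hiter x₀ hx₀ t).2 i) ?_
    have h1 : (A0 ^ t).mulVec x₀ i = ∑ j, (A0 ^ t) i j * x₀ j := by
      simp [Matrix.mulVec, dotProduct]
    rw [h1, Finset.mul_sum]
    exact Finset.sum_le_sum fun j _ =>
      mul_le_mul_of_nonneg_right (hee t i j) (hx₀ j)
  constructor
  · intro x₀ hx₀
    rw [tendsto_pi_nhds]
    intro i
    simp only [Pi.zero_apply]
    have hg0 : Filter.Tendsto (fun t => e t * ∑ j, x₀ j) Filter.atTop (nhds 0) := by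
      simpa using he0.mul_const (∑ j, x₀ j)
    exact squeeze_zero (fun t => (hiter x₀ hx₀ t).1 i) (fun t => hcomp x₀ hx₀ t i) hg0
  · intro ε hε
    obtain ⟨M, hM⟩ := he0.bddAbove_range
    have hMe : ∀ t, e t ≤ M := fun t => hM ⟨t, rfl⟩
    have hM0 : 0 ≤ M := le_trans (hennneg 0) (hMe 0)
    have hnM : (0 : ℝ) < n * (M + 1) := by
      have hn' : (0 : ℝ) < n := by exact_mod_cast hn
      nlinarith
    refine ⟨ε / (n * (M + 1)), div_pos hε hnM, ?_⟩
    intro x₀ hx₀ hδ t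
    have hS : (∑ i, x₀ i) = ∑ i, |x₀ i| :=
      Finset.sum_congr rfl fun i _ => (abs_of_nonneg (hx₀ i)).symm
    have hSnn : 0 ≤ ∑ i, x₀ i := Finset.sum_nonneg fun i _ => hx₀ i
    have hSδ : (∑ i, x₀ i) < ε / (n * (M + 1)) := by rw [hS]; exact hδ
    have habs : (∑ i, |(F^[t] x₀) i|) = ∑ i, F^[t] x₀ i :=
      Finset.sum_congr rfl fun i _ => abs_of_nonneg ((hiter x₀ hx₀ t).1 i)
    rw [habs]
    have s1 : (∑ i, F^[t] x₀ i) ≤ ∑ _i : Fin n, (e t * ∑ j, x₀ j) :=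
      Finset.sum_le_sum fun i _ => hcomp x₀ hx₀ t i
    calc ∑ i, F^[t] x₀ i ≤ ∑ _i : Fin n, (e t * ∑ j, x₀ j) := s1
    _ = (n : ℝ) * (e t * ∑ j, x₀ j) := by
      simp [Finset.sum_const, Finset.card_univ]
    _ ≤ (n : ℝ) * ((M + 1) * ∑ j, x₀ j) := by
      have hn0 : (0 : ℝ) ≤ n := by positivity
      have h2 := mul_le_mul_of_nonneg_right
        (le_trans (hMe t) (by linarith : M ≤ M + 1)) hSnn
      nlinarith
    _ < (n : ℝ) * ((M + 1) * (ε / (n * (M + 1)))) := by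
      have hM1 : (0 : ℝ) < M + 1 := by linarith
      have hnpos : (0 : ℝ) < n := by exact_mod_cast hn
      exact mul_lt_mul_of_pos_left
        (mul_lt_mul_of_pos_left hSδ hM1) hnpos
    _ = ε := by
      field_simp
end

section
/- In the metapopulation model, define R_{A(0)} := min{ min_{i ∈ {1,…,n}} g_i(0), min_{i ∈ {1,…,n}} ( g_i(0) · ∑_{j ≠ i} d_{ji}(0) ) }. If R_{A(0)} > 1, then ρ(A(0)) > 1. -/
open scoped ENNReal NNReal

attribute [local instance] Matrix.linftyOpNormedRing Matrix.linftyOpNormedAlgebra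

/-- Column sums of powers of a nonnegative matrix are bounded below by powers of a
lower bound on column sums. -/
lemma aux_colsum_pow {n : ℕ} (M : Matrix (Fin n) (Fin n) ℝ)
    (hM : ∀ i j, 0 ≤ M i j) {c : ℝ} (hc : 0 ≤ c)
    (h : ∀ j, c ≤ ∑ i, M i j) : ∀ (k : ℕ) (j : Fin n), c ^ k ≤ ∑ i, (M ^ k) i j := by
  intro k
  induction k with
  | zero =>
    intro j
    simp [Matrix.one_apply, Finset.sum_ite_eq]
  | succ k ih =>
    intro j
    simp only [pow_succ, Matrix.mul_apply]
    rw [Finset.sum_comm]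
    have h1 : ∀ l : Fin n, c ^ k * M l j ≤ ∑ i, (M ^ k) i l * M l j := by
      intro l
      rw [← Finset.sum_mul]
      exact mul_le_mul_of_nonneg_right (ih l) (hM l j)
    calc c ^ (k + 1) = c ^ k * c := by ring
      _ ≤ c ^ k * ∑ l, M l j := by
          exact mul_le_mul_of_nonneg_left (h j) (pow_nonneg hc k)
      _ = ∑ l, c ^ k * M l j := by rw [Finset.mul_sum]
      _ ≤ ∑ l, ∑ i, (M ^ k) i l * M l j := Finset.sum_le_sum fun l _ => h1 l

lemma aux_pow_nonneg {n : ℕ} (M : Matrix (Fin n) (Fin n) ℝ)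
    (hM : ∀ i j, 0 ≤ M i j) : ∀ (k : ℕ) (i j : Fin n), 0 ≤ (M ^ k) i j := by
  intro k
  induction k with
  | zero =>
    intro i j
    simp [Matrix.one_apply]
    split <;> norm_num
  | succ k ih =>
    intro i j
    simp only [pow_succ, Matrix.mul_apply]
    exact Finset.sum_nonneg fun l _ => mul_nonneg (ih i l) (hM l j)

/-- Lower bound on the L∞ operator norm of the complexification of a nonnegative
matrix from a lower bound on the total sum of entries. -/
lemma aux_norm_lower {n : ℕ} (hn : 0 < n) (N : Matrix (Fin n) (Fin n) ℝ)
    {c : ℝ} (hc : 0 ≤ c) (h : ∀ j, c ≤ ∑ i, N i j) (hN : ∀ i j, 0 ≤ N i j) :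
    c ≤ ‖N.map (fun a : ℝ => (a : ℂ))‖ := by
  set B := N.map (fun a : ℝ => (a : ℂ)) with hB
  have hrow : ∀ i : Fin n, (∑ j, ‖B i j‖) ≤ ‖B‖ := by
    intro i
    rw [Matrix.linfty_opNorm_def]
    have h1 : (∑ j, ‖B i j‖₊ : ℝ≥0) ≤ ((Finset.univ.sup fun i => ∑ j, ‖B i j‖₊ : ℝ≥0)) :=
      Finset.le_sup (f := fun i => ∑ j, ‖B i j‖₊) (Finset.mem_univ i)
    calc (∑ j, ‖B i j‖) = ((∑ j, ‖B i j‖₊ : ℝ≥0) : ℝ) := by push_cast; rfl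
      _ ≤ _ := by exact_mod_cast h1
  have habs : ∀ i j, ‖B i j‖ = N i j := by
    intro i j
    simp only [hB, Matrix.map_apply, Complex.norm_real, Real.norm_eq_abs]
    exact abs_of_nonneg (hN i j)
  have htot : (n : ℝ) * c ≤ (n : ℝ) * ‖B‖ := by
    calc (n : ℝ) * c = ∑ _j : Fin n, c := by simp [mul_comm]
      _ ≤ ∑ j, ∑ i, N i j := Finset.sum_le_sum fun j _ => h j
      _ = ∑ i, ∑ j, N i j := Finset.sum_comm
      _ = ∑ i, ∑ j, ‖B i j‖ := by simp_rw [habs]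
      _ ≤ ∑ _i : Fin n, ‖B‖ := Finset.sum_le_sum fun i _ => hrow i
      _ = (n : ℝ) * ‖B‖ := by simp [mul_comm]
  exact le_of_mul_le_mul_left htot (by exact_mod_cast hn)

theorem stmt_6 (n : ℕ) (hn : 0 < n)
    (g : Fin n → ℝ → ℝ)
    (hg_smooth : ∀ i, ContDiff ℝ 1 (g i))
    (hg_pos : ∀ i, ∀ x : ℝ, 0 ≤ x → 0 < g i x)
    (m : Fin n → ℝ) (hm_nonneg : ∀ i, 0 ≤ m i)
    (hf_bdd : ∀ i, ∀ x : ℝ, 0 ≤ x → g i x * x ≤ m i)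
    (d : Fin n → Fin n → ℝ → ℝ)
    (hd_smooth : ∀ i j, ContDiff ℝ 1 (d i j))
    (hd_pos : ∀ i j, ∀ x : ℝ, 0 ≤ x → 0 < d i j x)
    (hd_lt1 : ∀ i j, ∀ x : ℝ, 0 ≤ x → d i j x < 1)
    (hd_colsum : ∀ i, ∀ x : ℝ, 0 ≤ x → (∑ j, d j i x) < 1)
    (A0 : Matrix (Fin n) (Fin n) ℝ)
    (hA0 : ∀ i j, A0 i j = d i j 0 * g j 0)
    (hR : 1 < min
      (Finset.univ.inf' (Finset.univ_nonempty_iff.mpr (Fin.pos_iff_nonempty.mp hn)) (fun i => g i 0))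
      (Finset.univ.inf' (Finset.univ_nonempty_iff.mpr (Fin.pos_iff_nonempty.mp hn))
        (fun i => g i 0 * ∑ j ∈ Finset.univ.erase i, d j i 0))) :
    1 < specRad A0 := by
  haveI : Nonempty (Fin n) := Fin.pos_iff_nonempty.mp hn
  have hne : (Finset.univ : Finset (Fin n)).Nonempty := Finset.univ_nonempty
  -- entries of A0 are positive
  have hA0pos : ∀ i j, 0 < A0 i j := by
    intro i j
    rw [hA0]
    exact mul_pos (hd_pos i j 0 le_rfl) (hg_pos j 0 le_rfl)
  have hA0nn : ∀ i j, 0 ≤ A0 i j := fun i j => (hA0pos i j).le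
  -- every column sum exceeds 1
  have hcol : ∀ j, 1 < ∑ i, A0 i j := by
    intro j
    have hsum : (∑ i, A0 i j) = d j j 0 * g j 0 + g j 0 * ∑ i ∈ Finset.univ.erase j, d i j 0 := by
      rw [← Finset.add_sum_erase _ _ (Finset.mem_univ j)]
      simp only [hA0]
      rw [Finset.mul_sum]
      congr 1
      exact Finset.sum_congr rfl fun i _ => by ring
    have h2 : 1 < g j 0 * ∑ i ∈ Finset.univ.erase j, d i j 0 := by
      have := (lt_min_iff.mp hR).2
      calc (1 : ℝ) < _ := this
        _ ≤ _ := Finset.inf'_le _ (Finset.mem_univ j)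
    have h3 : 0 < d j j 0 * g j 0 := mul_pos (hd_pos j j 0 le_rfl) (hg_pos j 0 le_rfl)
    rw [hsum]; linarith
  -- let c be the minimal column sum
  set c : ℝ := Finset.univ.inf' hne (fun j => ∑ i, A0 i j) with hcdef
  have hc1 : 1 < c := by
    rw [hcdef, Finset.lt_inf'_iff]
    exact fun j _ => hcol j
  have hc0 : 0 ≤ c := by linarith
  have hcle : ∀ j, c ≤ ∑ i, A0 i j := fun j => Finset.inf'_le _ (Finset.mem_univ j)
  -- the complexified matrix
  set B : Matrix (Fin n) (Fin n) ℂ := A0.map (fun a : ℝ => (a : ℂ)) with hBdef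
  have hBpow : ∀ k : ℕ, B ^ k = (A0 ^ k).map (fun a : ℝ => (a : ℂ)) := by
    intro k
    have : B = (Complex.ofRealHom.mapMatrix : Matrix (Fin n) (Fin n) ℝ →+* Matrix (Fin n) (Fin n) ℂ) A0 := by
      rw [hBdef]; rfl
    rw [this, ← map_pow]; rfl
  -- norm lower bound on powers
  have hnormpow : ∀ k : ℕ, c ^ k ≤ ‖B ^ k‖ := by
    intro k
    rw [hBpow k]
    exact aux_norm_lower hn (A0 ^ k) (pow_nonneg hc0 k)
      (aux_colsum_pow A0 hA0nn hc0 hcle k)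
      (fun i j => aux_pow_nonneg A0 hA0nn k i j)
  -- Gelfand's formula gives a lower bound on the spectral radius
  have hgel := spectrum.pow_nnnorm_pow_one_div_tendsto_nhds_spectralRadius B
  have hcnn : ∀ᶠ k : ℕ in Filter.atTop,
      (c.toNNReal : ℝ≥0∞) ≤ (‖B ^ k‖₊ : ℝ≥0∞) ^ (1 / (k : ℝ)) := by
    filter_upwards [Filter.eventually_ge_atTop 1] with k hk
    have hk0 : (k : ℝ) ≠ 0 := by positivity
    have h1 : (c ^ k).toNNReal ≤ ‖B ^ k‖₊ := by
      have := hnormpow k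
      rw [← norm_toNNReal]
      exact Real.toNNReal_mono this
    have h2 : ((c ^ k).toNNReal : ℝ≥0∞) ^ (1 / (k : ℝ)) ≤ (‖B ^ k‖₊ : ℝ≥0∞) ^ (1 / (k : ℝ)) :=
      ENNReal.rpow_le_rpow (by exact_mod_cast h1) (by positivity)
    refine le_trans (le_of_eq ?_) h2
    rw [Real.toNNReal_pow hc0]
    rw [ENNReal.coe_pow, ← ENNReal.rpow_natCast, ← ENNReal.rpow_mul]
    rw [mul_one_div, div_self hk0, ENNReal.rpow_one]
  have hsr : (c.toNNReal : ℝ≥0∞) ≤ spectralRadius ℂ B := ge_of_tendsto hgel hcnn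
  -- hence some spectral value has modulus > 1
  have hex : ∃ μ ∈ spectrum ℂ B, 1 < ‖μ‖ := by
    by_contra hcon
    push_neg at hcon
    have hle : spectralRadius ℂ B ≤ 1 := by
      rw [spectralRadius]
      refine iSup₂_le fun μ hμ => ?_
      have : ‖μ‖₊ ≤ 1 := by
        rw [← Real.toNNReal_one]
        rw [← norm_toNNReal]
        exact Real.toNNReal_mono (by simpa using hcon μ hμ)
      exact_mod_cast this
    have ha : (c.toNNReal : ℝ≥0∞) ≤ 1 := le_trans hsr hle
    have hb : c.toNNReal ≤ 1 := by exact_mod_cast ha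
    have hcle1 : c ≤ ((1 : ℝ≥0) : ℝ) := Real.toNNReal_le_iff_le_coe.mp hb
    rw [NNReal.coe_one] at hcle1
    linarith
  obtain ⟨μ, hμ, hμ1⟩ := hex
  -- conclude via sSup
  have hSfin : {r : ℝ | ∃ ν : ℂ, ν ∈ spectrum ℂ B ∧ r = ‖ν‖}.Finite := by
    have : {r : ℝ | ∃ ν : ℂ, ν ∈ spectrum ℂ B ∧ r = ‖ν‖}
        = (fun ν : ℂ => ‖ν‖) '' (spectrum ℂ B) := by
      ext r
      simp [Set.mem_image, eq_comm]
    rw [this]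
    exact (Matrix.finite_spectrum B).image _
  have hmem : ‖μ‖ ∈ {r : ℝ | ∃ ν : ℂ, ν ∈ spectrum ℂ B ∧ r = ‖ν‖} :=
    ⟨μ, hμ, rfl⟩
  have : ‖μ‖ ≤ specRad A0 := by
    rw [specRad]
    exact le_csSup hSfin.bddAbove hmem
  linarith
end

section
/- In the metapopulation model, define R_{A(0)} := min{ min_{i ∈ {1,…,n}} g_i(0), min_{i ∈ {1,…,n}} ( g_i(0) · ∑_{j ≠ i} d_{ji}(0) ) }. If R_{A(0)} > 1, then the extinction equilibrium x* = 0 is an unstable fixed point of F: there exists ε > 0 such that for every δ > 0 there exist x₀ ∈ ℝ₊ⁿ with ‖x₀‖₁ < δ and t ∈ ℕ with ‖Fᵗ(x₀)‖₁ ≥ ε. -/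
theorem stmt_7 (n : ℕ) (hn : 0 < n)
    (g : Fin n → ℝ → ℝ)
    (hg_smooth : ∀ i, ContDiff ℝ 1 (g i))
    (hg_pos : ∀ i, ∀ x : ℝ, 0 ≤ x → 0 < g i x)
    (m : Fin n → ℝ) (hm_nonneg : ∀ i, 0 ≤ m i)
    (hf_bdd : ∀ i, ∀ x : ℝ, 0 ≤ x → g i x * x ≤ m i)
    (d : Fin n → Fin n → ℝ → ℝ)
    (hd_smooth : ∀ i j, ContDiff ℝ 1 (d i j))
    (hd_pos : ∀ i j, ∀ x : ℝ, 0 ≤ x → 0 < d i j x)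
    (hd_lt1 : ∀ i j, ∀ x : ℝ, 0 ≤ x → d i j x < 1)
    (hd_colsum : ∀ i, ∀ x : ℝ, 0 ≤ x → (∑ j, d j i x) < 1)
    (F : (Fin n → ℝ) → (Fin n → ℝ))
    (hF : ∀ x : Fin n → ℝ, ∀ i, F x i = ∑ j, d i j (x j) * (g j (x j) * x j))
    (hR : 1 < min
      (Finset.univ.inf' (Finset.univ_nonempty_iff.mpr (Fin.pos_iff_nonempty.mp hn)) (fun i => g i 0))
      (Finset.univ.inf' (Finset.univ_nonempty_iff.mpr (Fin.pos_iff_nonempty.mp hn))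
        (fun i => g i 0 * ∑ j ∈ Finset.univ.erase i, d j i 0))) :
    ∃ ε : ℝ, 0 < ε ∧ ∀ δ : ℝ, 0 < δ →
      ∃ x₀ : Fin n → ℝ, (∀ i, 0 ≤ x₀ i) ∧ (∑ i, |x₀ i|) < δ ∧
        ∃ t : ℕ, ε ≤ ∑ i, |(F^[t] x₀) i| := by

  have hne : Nonempty (Fin n) := Fin.pos_iff_nonempty.mp hn
  have hne' : (Finset.univ : Finset (Fin n)).Nonempty := Finset.univ_nonempty
  set φ : Fin n → ℝ → ℝ := fun j y => (∑ i, d i j y) * (g j y) with hφ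
  have hφcont : ∀ j, Continuous (φ j) := fun j =>
    (continuous_finset_sum _ fun i _ => (hd_smooth i j).continuous).mul (hg_smooth j).continuous
  have hφ0 : ∀ j, 1 < φ j 0 := by
    intro j
    have h1 : 1 < g j 0 * ∑ i ∈ Finset.univ.erase j, d i j 0 :=
      lt_of_lt_of_le hR (le_trans (min_le_right _ _) (Finset.inf'_le _ (Finset.mem_univ j)))
    have h2 : ∑ i ∈ Finset.univ.erase j, d i j 0 ≤ ∑ i, d i j 0 :=
      Finset.sum_le_sum_of_subset_of_nonneg (Finset.subset_univ _)
        (fun i _ _ => (hd_pos i j 0 le_rfl).le)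
    have hg0 : 0 < g j 0 := hg_pos j 0 le_rfl
    have : g j 0 * ∑ i ∈ Finset.univ.erase j, d i j 0 ≤ g j 0 * ∑ i, d i j 0 :=
      mul_le_mul_of_nonneg_left h2 hg0.le
    have hφeq : φ j 0 = g j 0 * ∑ i, d i j 0 := by simp [hφ]; ring
    linarith
  set μ : ℝ := Finset.univ.inf' hne' (fun j => φ j 0) with hμdef
  have hμ : 1 < μ := (Finset.lt_inf'_iff _).mpr fun j _ => hφ0 j
  set ρ : ℝ := (1 + μ) / 2 with hρdef
  have hρ1 : 1 < ρ := by simp only [hρdef]; linarith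
  have hρμ : ρ < μ := by simp only [hρdef]; linarith
  have hδex : ∀ j, ∃ dd > 0, ∀ y : ℝ, |y| < dd → ρ ≤ φ j y := by
    intro j
    have hφjρ : ρ < φ j 0 := lt_of_lt_of_le hρμ (Finset.inf'_le _ (Finset.mem_univ j))
    have hc := ((hφcont j).continuousAt (x := 0))
    rw [Metric.continuousAt_iff] at hc
    obtain ⟨dd, hdd, hsp⟩ := hc (φ j 0 - ρ) (by linarith)
    refine ⟨dd, hdd, fun y hy => ?_⟩
    have := hsp (by simpa [Real.dist_eq] using hy : dist y 0 < dd)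
    rw [Real.dist_eq, abs_sub_lt_iff] at this
    linarith [this.2]
  choose δf hδpos hδspec using hδex
  set η : ℝ := (Finset.univ.inf' hne' δf) / 2 with hηdef
  have hDpos : 0 < Finset.univ.inf' hne' δf := (Finset.lt_inf'_iff _).mpr fun j _ => hδpos j
  have hηpos : 0 < η := by simp only [hηdef]; linarith
  have hηlt : ∀ j, η < δf j := by
    intro j
    have := Finset.inf'_le δf (Finset.mem_univ j)
    simp only [hηdef]; linarith
  have hFnn : ∀ x : Fin n → ℝ, (∀ i, 0 ≤ x i) → ∀ i, 0 ≤ F x i := by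
    intro x hx i
    rw [hF]
    exact Finset.sum_nonneg fun j _ =>
      mul_nonneg (hd_pos i j _ (hx j)).le (mul_nonneg (hg_pos j _ (hx j)).le (hx j))
  have hgrow : ∀ x : Fin n → ℝ, (∀ i, 0 ≤ x i) → (∀ i, x i ≤ η) →
      ρ * ∑ i, x i ≤ ∑ i, F x i := by
    intro x hx hxη
    have heq : ∑ i, F x i = ∑ j, φ j (x j) * x j := by
      simp only [hF]
      rw [Finset.sum_comm]
      refine Finset.sum_congr rfl fun j _ => ?_
      rw [← Finset.sum_mul]
      simp only [hφ]
      ring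
    rw [heq, Finset.mul_sum]
    refine Finset.sum_le_sum fun j _ => ?_
    have habs : |x j| < δf j := by
      rw [abs_of_nonneg (hx j)]; exact lt_of_le_of_lt (hxη j) (hηlt j)
    exact mul_le_mul_of_nonneg_right (hδspec j _ habs) (hx j)
  refine ⟨η, hηpos, fun δ hδ => ?_⟩
  have hnpos : (0:ℝ) < n := by exact_mod_cast hn
  set c : ℝ := min (δ / (2 * n)) η with hcdef
  have hc : 0 < c := lt_min (by positivity) hηpos
  refine ⟨fun _ => c, fun i => hc.le, ?_, ?_⟩
  · have : ∑ _i : Fin n, |c| = (n : ℝ) * c := by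
      rw [abs_of_nonneg hc.le]
      simp [Finset.sum_const, Fintype.card_fin, nsmul_eq_mul]
    rw [this]
    have hcle : c ≤ δ / (2 * n) := min_le_left _ _
    have : (n : ℝ) * c ≤ (n : ℝ) * (δ / (2 * n)) := mul_le_mul_of_nonneg_left hcle hnpos.le
    have h2 : (n : ℝ) * (δ / (2 * n)) = δ / 2 := by field_simp
    linarith
  · by_contra hcon
    push_neg at hcon
    set x₀ : Fin n → ℝ := fun _ => c with hx₀
    have hnn : ∀ t, ∀ i, 0 ≤ (F^[t] x₀) i := by
      intro t
      induction t with
      | zero => exact fun i => hc.le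
      | succ t ih => rw [Function.iterate_succ_apply']; exact hFnn _ ih
    have habseq : ∀ t, ∑ i, |(F^[t] x₀) i| = ∑ i, (F^[t] x₀) i :=
      fun t => Finset.sum_congr rfl fun i _ => abs_of_nonneg (hnn t i)
    have hbd : ∀ t, ∀ i, (F^[t] x₀) i ≤ η := by
      intro t i
      have h1 : (F^[t] x₀) i ≤ ∑ k, (F^[t] x₀) k :=
        Finset.single_le_sum (fun k _ => hnn t k) (Finset.mem_univ i)
      have h2 := hcon t
      rw [habseq t] at h2
      linarith
    have hS : ∀ t, ρ ^ t * ((n : ℝ) * c) ≤ ∑ i, (F^[t] x₀) i := by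
      intro t
      induction t with
      | zero =>
        simp only [pow_zero, one_mul, Function.iterate_zero_apply]
        simp [hx₀, Finset.sum_const, Fintype.card_fin, nsmul_eq_mul]
      | succ t ih =>
        rw [Function.iterate_succ_apply']
        calc ρ ^ (t + 1) * ((n : ℝ) * c) = ρ * (ρ ^ t * ((n : ℝ) * c)) := by ring
          _ ≤ ρ * ∑ i, (F^[t] x₀) i :=
              mul_le_mul_of_nonneg_left ih (by linarith)
          _ ≤ ∑ i, F (F^[t] x₀) i := hgrow _ (hnn t) (hbd t)
    obtain ⟨t, ht⟩ := pow_unbounded_of_one_lt (η / ((n : ℝ) * c)) hρ1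
    have hnc : 0 < (n : ℝ) * c := by positivity
    have h3 : η < ρ ^ t * ((n : ℝ) * c) := by
      rw [div_lt_iff₀ hnc] at ht
      linarith
    have h4 := hcon t
    rw [habseq t] at h4
    linarith [hS t]
end

section
/- In the metapopulation model, if ρ(A(0)) > 1 then there exists a nonempty, compact, convex set Ω ⊆ ℝ₊ⁿ with 0 ∉ Ω such that F(Ω) ⊆ Ω. -/
open Matrix

lemma spec_transpose {n : ℕ} (M : Matrix (Fin n) (Fin n) ℂ) :
    spectrum ℂ M.transpose = spectrum ℂ M := by
  ext μ
  simp only [spectrum.mem_iff, not_iff_not, Matrix.isUnit_iff_isUnit_det]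
  have key : ((algebraMap ℂ (Matrix (Fin n) (Fin n) ℂ)) μ - M.transpose)
      = ((algebraMap ℂ _ μ) - M).transpose := by
    simp [Matrix.transpose_sub, Matrix.algebraMap_eq_diagonal, Matrix.diagonal_transpose]
  rw [key, Matrix.det_transpose]

lemma exists_eigvec {n : ℕ} (M : Matrix (Fin n) (Fin n) ℂ) {μ : ℂ} (h : μ ∈ spectrum ℂ M) :
    ∃ v : Fin n → ℂ, v ≠ 0 ∧ M.mulVec v = μ • v := by
  have h2 : Module.End.HasEigenvalue (Matrix.toLin' M) μ := by
    rw [Module.End.hasEigenvalue_iff_mem_spectrum]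
    rwa [show Matrix.toLin' M = Matrix.toLinAlgEquiv' M from rfl, AlgEquiv.spectrum_eq]
  obtain ⟨v, hv⟩ := h2.exists_hasEigenvector
  exact ⟨v, hv.right, by rw [← Matrix.toLin'_apply]; exact hv.apply_eq_smul⟩

/-- From spectral radius > 1 and positive entries, get a positive left sub-eigenvector. -/
lemma exists_left_subeigen {n : ℕ} (hn : 0 < n) (A0 : Matrix (Fin n) (Fin n) ℝ)
    (hA0pos : ∀ i j, 0 < A0 i j)
    (hρ : 1 < sSup {r : ℝ | ∃ μ : ℂ, μ ∈ spectrum ℂ (A0.map (fun a : ℝ => (a : ℂ))) ∧ r = ‖μ‖}) :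
    ∃ w : Fin n → ℝ, (∀ i, 0 < w i) ∧ ∀ j, w j < ∑ i, w i * A0 i j := by
  haveI : Nonempty (Fin n) := ⟨⟨0, hn⟩⟩
  set Mc := A0.map (fun a : ℝ => (a : ℂ)) with hMc
  obtain ⟨μ, hμspec, hμ1⟩ : ∃ μ : ℂ, μ ∈ spectrum ℂ Mc ∧ 1 < ‖μ‖ := by
    by_contra h
    push_neg at h
    have : sSup {r : ℝ | ∃ μ : ℂ, μ ∈ spectrum ℂ Mc ∧ r = ‖μ‖} ≤ 1 :=
      Real.sSup_le (by rintro r ⟨μ, hμ, rfl⟩; exact h μ hμ) zero_le_one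
    linarith
  have hμT : μ ∈ spectrum ℂ Mc.transpose := by rwa [spec_transpose]
  obtain ⟨v, hvne, heig⟩ := exists_eigvec _ hμT
  set u : Fin n → ℝ := fun i => ‖v i‖ with hu
  obtain ⟨k, hk⟩ := Function.ne_iff.mp hvne
  have huk : 0 < u k := by simpa [hu] using hk
  have hunn : ∀ i, 0 ≤ u i := fun i => norm_nonneg _
  have hsub : ∀ j, ‖μ‖ * u j ≤ ∑ i, A0 i j * u i := by
    intro j
    have h1 : Mc.transpose.mulVec v j = μ * v j := by rw [heig]; simp
    have h2 : ∑ i, ((A0 i j : ℝ) : ℂ) * v i = μ * v j := by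
      rw [← h1]; simp [Matrix.mulVec, dotProduct, hMc]
    calc ‖μ‖ * u j = ‖μ * v j‖ := (norm_mul μ (v j)).symm
      _ = ‖∑ i, ((A0 i j : ℝ) : ℂ) * v i‖ := by rw [h2]
      _ ≤ ∑ i, ‖((A0 i j : ℝ) : ℂ) * v i‖ := norm_sum_le _ _
      _ = ∑ i, A0 i j * u i := by
          refine Finset.sum_congr rfl fun i _ => ?_
          rw [norm_mul, Complex.norm_real, Real.norm_of_nonneg (hA0pos i j).le]
  refine ⟨fun i => ∑ l, A0 l i * u l, fun i => ?_, fun j => ?_⟩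
  · refine Finset.sum_pos' (fun l _ => mul_nonneg (hA0pos l i).le (hunn l)) ?_
    exact ⟨k, Finset.mem_univ k, mul_pos (hA0pos k i) huk⟩
  · have hpos : 0 < ∑ l, A0 l j * u l := by
      refine Finset.sum_pos' (fun l _ => mul_nonneg (hA0pos l j).le (hunn l)) ?_
      exact ⟨k, Finset.mem_univ k, mul_pos (hA0pos k j) huk⟩
    have step : ‖μ‖ * ∑ l, A0 l j * u l ≤ ∑ i, (∑ l, A0 l i * u l) * A0 i j := by
      calc ‖μ‖ * ∑ l, A0 l j * u l = ∑ i, (‖μ‖ * u i) * A0 i j := by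
            rw [Finset.mul_sum]; exact Finset.sum_congr rfl fun i _ => by ring
          _ ≤ ∑ i, (∑ l, A0 l i * u l) * A0 i j := by
            refine Finset.sum_le_sum fun i _ => ?_
            exact mul_le_mul_of_nonneg_right (hsub i) (hA0pos i j).le
    calc (∑ l, A0 l j * u l) = 1 * ∑ l, A0 l j * u l := (one_mul _).symm
      _ < ‖μ‖ * ∑ l, A0 l j * u l := by
          exact mul_lt_mul_of_pos_right hμ1 hpos
      _ ≤ _ := step

theorem stmt_11 (n : ℕ) (hn : 0 < n)
    (g : Fin n → ℝ → ℝ)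
    (hg_smooth : ∀ i, ContDiff ℝ 1 (g i))
    (hg_pos : ∀ i, ∀ x : ℝ, 0 ≤ x → 0 < g i x)
    (m : Fin n → ℝ) (hm_nonneg : ∀ i, 0 ≤ m i)
    (hf_bdd : ∀ i, ∀ x : ℝ, 0 ≤ x → g i x * x ≤ m i)
    (d : Fin n → Fin n → ℝ → ℝ)
    (hd_smooth : ∀ i j, ContDiff ℝ 1 (d i j))
    (hd_pos : ∀ i j, ∀ x : ℝ, 0 ≤ x → 0 < d i j x)
    (hd_lt1 : ∀ i j, ∀ x : ℝ, 0 ≤ x → d i j x < 1)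
    (hd_colsum : ∀ i, ∀ x : ℝ, 0 ≤ x → (∑ j, d j i x) < 1)
    (F : (Fin n → ℝ) → (Fin n → ℝ))
    (hF : ∀ x : Fin n → ℝ, ∀ i, F x i = ∑ j, d i j (x j) * (g j (x j) * x j))
    (A0 : Matrix (Fin n) (Fin n) ℝ)
    (hA0 : ∀ i j, A0 i j = d i j 0 * g j 0)
    (hρ : 1 < specRad A0) :
    ∃ Ω : Set (Fin n → ℝ), Ω.Nonempty ∧ IsCompact Ω ∧ Convex ℝ Ω ∧
      Ω ⊆ {x : Fin n → ℝ | ∀ i, 0 ≤ x i} ∧ (0 : Fin n → ℝ) ∉ Ω ∧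
      ∀ x ∈ Ω, F x ∈ Ω := by
  haveI : Nonempty (Fin n) := ⟨⟨0, hn⟩⟩
  have hA0pos : ∀ i j, 0 < A0 i j := fun i j => by
    rw [hA0]; exact mul_pos (hd_pos i j 0 le_rfl) (hg_pos j 0 le_rfl)
  obtain ⟨w, hwpos, hwkey⟩ := exists_left_subeigen hn A0 hA0pos hρ
  set M : ℝ := ∑ j, m j with hMdef
  have hmpos : ∀ j, 0 < m j := fun j =>
    lt_of_lt_of_le (by simpa using hg_pos j 1 zero_le_one) (hf_bdd j 1 zero_le_one)
  have hMpos : 0 < M := Finset.sum_pos (fun j _ => hmpos j) Finset.univ_nonempty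
  have hφcont : ∀ j : Fin n, Continuous fun t => ∑ i, w i * (d i j t * g j t) := fun j =>
    continuous_finset_sum _ fun i _ =>
      continuous_const.mul ((hd_smooth i j).continuous.mul (hg_smooth j).continuous)
  have hφ0 : ∀ j, w j < ∑ i, w i * (d i j 0 * g j 0) := fun j => by
    have h := hwkey j; simp only [hA0] at h; exact h
  have hφpos : ∀ j, ∀ t : ℝ, 0 ≤ t → 0 < ∑ i, w i * (d i j t * g j t) := fun j t ht =>
    Finset.sum_pos (fun i _ => mul_pos (hwpos i) (mul_pos (hd_pos i j t ht) (hg_pos j t ht)))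
      Finset.univ_nonempty
  have hrj : ∀ j : Fin n, ∃ ε > 0, ∀ t : ℝ, |t| < ε → w j < ∑ i, w i * (d i j t * g j t) := by
    intro j
    have hopen : IsOpen {t : ℝ | w j < ∑ i, w i * (d i j t * g j t)} :=
      isOpen_lt continuous_const (hφcont j)
    obtain ⟨εj, hεj, hball⟩ := Metric.isOpen_iff.mp hopen 0 (hφ0 j)
    exact ⟨εj, hεj, fun t ht => hball (by simpa [Real.dist_eq] using ht)⟩
  choose ε hεpos hε using hrj
  set r : ℝ := min (Finset.univ.inf' Finset.univ_nonempty (fun j => ε j / 2)) M with hrdef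
  have hrpos : 0 < r :=
    lt_min ((Finset.lt_inf'_iff _).mpr fun j _ => half_pos (hεpos j)) hMpos
  have hrM : r ≤ M := min_le_right _ _
  have hrsmall : ∀ j (t : ℝ), 0 ≤ t → t ≤ r → w j < ∑ i, w i * (d i j t * g j t) := by
    intro j t ht htr
    apply hε j
    have h1 : r ≤ ε j / 2 := le_trans (min_le_left _ _) (Finset.inf'_le _ (Finset.mem_univ j))
    rw [abs_of_nonneg ht]; linarith [hεpos j]
  have hηj : ∀ j : Fin n, ∃ c, 0 < c ∧
      ∀ t ∈ Set.Icc r M, c ≤ (∑ i, w i * (d i j t * g j t)) * t := by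
    intro j
    obtain ⟨t0, ht0, hmin⟩ := isCompact_Icc.exists_isMinOn (Set.nonempty_Icc.mpr hrM)
      (((hφcont j).mul continuous_id).continuousOn)
    refine ⟨_, ?_, fun t htt => (isMinOn_iff.mp hmin) t htt⟩
    exact mul_pos (hφpos j t0 (le_trans hrpos.le ht0.1)) (lt_of_lt_of_le hrpos ht0.1)
  choose η hηpos hηle using hηj
  set δ : ℝ := min (Finset.univ.inf' Finset.univ_nonempty η) (M * ∑ i, w i) with hδdef
  have hδpos : 0 < δ := lt_min ((Finset.lt_inf'_iff _).mpr fun j _ => hηpos j)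
    (mul_pos hMpos (Finset.sum_pos (fun i _ => hwpos i) Finset.univ_nonempty))
  refine ⟨(Set.univ.pi fun _ : Fin n => Set.Icc (0:ℝ) M) ∩ {x | δ ≤ ∑ i, w i * x i},
    ?_, ?_, ?_, ?_, ?_, ?_⟩
  · refine ⟨fun _ => M, fun i _ => ⟨hMpos.le, le_rfl⟩, ?_⟩
    have h1 : ∑ i, w i * M = M * ∑ i, w i := by
      rw [Finset.mul_sum]; exact Finset.sum_congr rfl fun i _ => by ring
    show δ ≤ ∑ i, w i * M
    rw [h1]; exact min_le_right _ _
  · exact (isCompact_univ_pi fun i => isCompact_Icc).inter_right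
      (isClosed_le continuous_const
        (continuous_finset_sum _ fun i _ => continuous_const.mul (continuous_apply i)))
  · refine (convex_pi fun i _ => convex_Icc 0 M).inter ?_
    have hlin : IsLinearMap ℝ (fun x : Fin n → ℝ => ∑ i, w i * x i) := by
      constructor
      · intro x y; simp only [Pi.add_apply, mul_add]; rw [Finset.sum_add_distrib]
      · intro c x
        simp only [Pi.smul_apply, smul_eq_mul, Finset.mul_sum]
        exact Finset.sum_congr rfl fun i _ => by ring
    exact convex_halfSpace_ge hlin δ
  · intro x hx i; exact (hx.1 i (Set.mem_univ i)).1
  · intro h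
    have h2 : δ ≤ (0:ℝ) := by simpa using h.2
    linarith
  · intro x hx
    have hx0 : ∀ i, 0 ≤ x i := fun i => (hx.1 i (Set.mem_univ i)).1
    have hxM : ∀ i, x i ≤ M := fun i => (hx.1 i (Set.mem_univ i)).2
    have hxδ : δ ≤ ∑ i, w i * x i := hx.2
    refine ⟨fun i _ => ⟨?_, ?_⟩, ?_⟩
    · rw [hF]
      exact Finset.sum_nonneg fun j _ => mul_nonneg (hd_pos i j _ (hx0 j)).le
        (mul_nonneg (hg_pos j _ (hx0 j)).le (hx0 j))
    · rw [hF, hMdef]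
      refine Finset.sum_le_sum fun j _ => ?_
      have h1 : 0 ≤ g j (x j) * x j := mul_nonneg (hg_pos j _ (hx0 j)).le (hx0 j)
      calc d i j (x j) * (g j (x j) * x j) ≤ 1 * (g j (x j) * x j) :=
            mul_le_mul_of_nonneg_right (hd_lt1 i j _ (hx0 j)).le h1
        _ = g j (x j) * x j := one_mul _
        _ ≤ m j := hf_bdd j _ (hx0 j)
    · show δ ≤ ∑ i, w i * F x i
      have hrw : ∑ i, w i * F x i = ∑ j, (∑ i, w i * (d i j (x j) * g j (x j))) * x j := by
        calc ∑ i, w i * F x i = ∑ i, ∑ j, w i * (d i j (x j) * (g j (x j) * x j)) := by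
              refine Finset.sum_congr rfl fun i _ => ?_; rw [hF, Finset.mul_sum]
          _ = ∑ j, ∑ i, w i * (d i j (x j) * (g j (x j) * x j)) := Finset.sum_comm
          _ = ∑ j, (∑ i, w i * (d i j (x j) * g j (x j))) * x j := by
              refine Finset.sum_congr rfl fun j _ => ?_
              rw [Finset.sum_mul]; exact Finset.sum_congr rfl fun i _ => by ring
      rw [hrw]
      by_cases hcase : ∀ j, x j ≤ r
      · have h1 : ∑ j, w j * x j ≤ ∑ j, (∑ i, w i * (d i j (x j) * g j (x j))) * x j :=
          Finset.sum_le_sum fun j _ =>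
            mul_le_mul_of_nonneg_right (hrsmall j (x j) (hx0 j) (hcase j)).le (hx0 j)
        linarith
      · push_neg at hcase
        obtain ⟨j0, hj0⟩ := hcase
        have hmem : x j0 ∈ Set.Icc r M := ⟨hj0.le, hxM j0⟩
        have hterm : η j0 ≤ (∑ i, w i * (d i j0 (x j0) * g j0 (x j0))) * x j0 := hηle j0 _ hmem
        have hall : ∀ j ∈ Finset.univ, 0 ≤ (∑ i, w i * (d i j (x j) * g j (x j))) * x j :=
          fun j _ => mul_nonneg (hφpos j (x j) (hx0 j)).le (hx0 j)
        have hsingle := Finset.single_le_sum hall (Finset.mem_univ j0)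
        have hδη : δ ≤ η j0 := le_trans (min_le_left _ _) (Finset.inf'_le _ (Finset.mem_univ j0))
        linarith
end

section
/- In the metapopulation model, if ρ(A(0)) > 1 then F is uniformly strongly persistent with respect to the minimum component: there exists ε > 0 such that for every x₀ ∈ ℝ₊ⁿ with x₀ ≠ 0 (in particular whenever min_i (x₀)_i > 0), liminf_{t→∞} min_{i ∈ {1,…,n}} (Fᵗ(x₀))_i ≥ ε. -/
open Module Matrix Filter

private lemma specRad_step1 {n : ℕ} (A : Matrix (Fin n) (Fin n) ℝ) (h : 1 < specRad A) :
    ∃ μ : ℂ, μ ∈ spectrum ℂ (A.map (fun a : ℝ => (a : ℂ))) ∧ 1 < ‖μ‖ := by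
  set S := {r : ℝ | ∃ μ : ℂ, μ ∈ spectrum ℂ (A.map (fun a : ℝ => (a : ℂ))) ∧ r = ‖μ‖}
    with hS_def
  have hS : ∃ r ∈ S, 1 < r := by
    by_cases hb : BddAbove S
    · rcases Set.eq_empty_or_nonempty S with he | hne
      · exfalso; rw [specRad, ← hS_def, he] at h; rw [Real.sSup_empty] at h; linarith
      · exact exists_lt_of_lt_csSup hne h
    · rcases not_bddAbove_iff.mp hb 1 with ⟨r, hr, hr1⟩
      exact ⟨r, hr, hr1⟩
  obtain ⟨r, ⟨μ, hμ, rfl⟩, hr1⟩ := hS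
  exact ⟨μ, hμ, hr1⟩

private lemma specRad_step2 {n : ℕ} (M : Matrix (Fin n) (Fin n) ℂ) (μ : ℂ)
    (h : μ ∈ spectrum ℂ M) :
    ∃ w : Fin n → ℂ, w ≠ 0 ∧ Mᵀ.mulVec w = μ • w := by
  have ht : μ ∈ spectrum ℂ Mᵀ := by
    rw [spectrum.mem_iff, Algebra.algebraMap_eq_smul_one] at h ⊢
    intro hu
    apply h
    have h2 : (μ • (1 : Matrix (Fin n) (Fin n) ℂ) - Mᵀ) = (μ • 1 - M)ᵀ := by
      simp [Matrix.transpose_sub, Matrix.transpose_smul]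
    rw [h2, Matrix.isUnit_iff_isUnit_det, Matrix.det_transpose,
      ← Matrix.isUnit_iff_isUnit_det] at hu
    exact hu
  rw [← AlgEquiv.spectrum_eq (Matrix.toLinAlgEquiv' (R := ℂ) (n := Fin n)),
    ← Module.End.hasEigenvalue_iff_mem_spectrum] at ht
  obtain ⟨w, hw⟩ := ht.exists_hasEigenvector
  refine ⟨w, hw.right, ?_⟩
  have := hw.apply_eq_smul
  rwa [Matrix.toLinAlgEquiv'_apply] at this

private lemma specRad_step3 {n : ℕ} (A : Matrix (Fin n) (Fin n) ℝ) (hA : ∀ i j, 0 < A i j) (μ : ℂ)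
    (w : Fin n → ℂ) (hw0 : w ≠ 0)
    (hw : (A.map (fun a : ℝ => (a : ℂ)))ᵀ.mulVec w = μ • w) :
    ∃ v : Fin n → ℝ, (∀ i, 0 < v i) ∧ ∀ i, ‖μ‖ * v i ≤ ∑ j, A j i * v j := by
  set u : Fin n → ℝ := fun j => ‖w j‖ with hu_def
  have hu_nonneg : ∀ j, 0 ≤ u j := fun j => norm_nonneg _
  obtain ⟨k, hk⟩ : ∃ k, w k ≠ 0 := by
    by_contra hc
    push_neg at hc
    exact hw0 (funext fun j => hc j)
  have huk : 0 < u k := by simpa [hu_def] using hk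
  have hu : ∀ i, ‖μ‖ * u i ≤ ∑ j, A j i * u j := by
    intro i
    have h1 : (∑ j, (A j i : ℂ) * w j) = μ * w i := by
      have := congrFun hw i
      simpa [Matrix.mulVec, dotProduct, Matrix.transpose_apply, Matrix.map_apply] using this
    calc ‖μ‖ * u i = ‖∑ j, (A j i : ℂ) * w j‖ := by
          rw [h1, norm_mul]
      _ ≤ ∑ j, ‖(A j i : ℂ) * w j‖ := norm_sum_le _ _
      _ = ∑ j, A j i * u j := by
          refine Finset.sum_congr rfl fun j _ => ?_
          rw [norm_mul, Complex.norm_real, Real.norm_eq_abs, abs_of_pos (hA j i)]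
  refine ⟨fun i => ∑ j, A j i * u j, fun i => ?_, fun i => ?_⟩
  · refine Finset.sum_pos' (fun j _ => mul_nonneg (hA j i).le (hu_nonneg j))
      ⟨k, Finset.mem_univ k, mul_pos (hA k i) huk⟩
  · calc ‖μ‖ * ∑ j, A j i * u j = ∑ j, A j i * (‖μ‖ * u j) := by
          rw [Finset.mul_sum]; refine Finset.sum_congr rfl fun j _ => by ring
      _ ≤ ∑ j, A j i * ∑ k', A k' j * u k' := by
          refine Finset.sum_le_sum fun j _ => mul_le_mul_of_nonneg_left (hu j) (hA j i).le
      _ = _ := rfl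

theorem stmt_14 (n : ℕ) (hn : 0 < n)
    (g : Fin n → ℝ → ℝ)
    (hg_smooth : ∀ i, ContDiff ℝ 1 (g i))
    (hg_pos : ∀ i, ∀ x : ℝ, 0 ≤ x → 0 < g i x)
    (m : Fin n → ℝ) (hm_nonneg : ∀ i, 0 ≤ m i)
    (hf_bdd : ∀ i, ∀ x : ℝ, 0 ≤ x → g i x * x ≤ m i)
    (d : Fin n → Fin n → ℝ → ℝ)
    (hd_smooth : ∀ i j, ContDiff ℝ 1 (d i j))
    (hd_pos : ∀ i j, ∀ x : ℝ, 0 ≤ x → 0 < d i j x)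
    (hd_lt1 : ∀ i j, ∀ x : ℝ, 0 ≤ x → d i j x < 1)
    (hd_colsum : ∀ i, ∀ x : ℝ, 0 ≤ x → (∑ j, d j i x) < 1)
    (F : (Fin n → ℝ) → (Fin n → ℝ))
    (hF : ∀ x : Fin n → ℝ, ∀ i, F x i = ∑ j, d i j (x j) * (g j (x j) * x j))
    (A0 : Matrix (Fin n) (Fin n) ℝ)
    (hA0 : ∀ i j, A0 i j = d i j 0 * g j 0)
    (hρ : 1 < specRad A0) :
    ∃ ε : ℝ, 0 < ε ∧
      ∀ x₀ : Fin n → ℝ, (∀ i, 0 ≤ x₀ i) → x₀ ≠ 0 →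
        ε ≤ Filter.liminf
          (fun t : ℕ => Finset.univ.inf' (Finset.univ_nonempty_iff.mpr (Fin.pos_iff_nonempty.mp hn)) (fun i => F^[t] x₀ i))
          Filter.atTop := by
  classical
  have hne : (Finset.univ : Finset (Fin n)).Nonempty :=
    Finset.univ_nonempty_iff.mpr (Fin.pos_iff_nonempty.mp hn)
  obtain ⟨i0, -⟩ := id hne
  -- positivity of A0
  have hA0pos : ∀ i j, 0 < A0 i j := fun i j => by
    rw [hA0]; exact mul_pos (hd_pos i j 0 le_rfl) (hg_pos j 0 le_rfl)
  -- get positive subeigenvector of the transpose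
  obtain ⟨μ, hμmem, hμ1⟩ := specRad_step1 A0 hρ
  obtain ⟨w, hw0, hw⟩ := specRad_step2 _ μ hμmem
  obtain ⟨v, hv_pos, hv⟩ := specRad_step3 A0 hA0pos μ w hw0 hw
  set ρ : ℝ := ‖μ‖ with hρdef
  set ρ' : ℝ := (1 + ρ) / 2 with hρ'def
  have hρ'1 : 1 < ρ' := by rw [hρ'def]; linarith
  have hρ'ρ : ρ' < ρ := by rw [hρ'def]; linarith
  -- extrema of v
  set vmin : ℝ := Finset.univ.inf' hne v with hvmin_def
  set vmax : ℝ := Finset.univ.sup' hne v with hvmax_def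
  have hvmin_pos : 0 < vmin := (Finset.lt_inf'_iff hne).mpr fun i _ => hv_pos i
  have hvmin_le : ∀ i, vmin ≤ v i := fun i => Finset.inf'_le _ (Finset.mem_univ i)
  have hvmax_ge : ∀ i, v i ≤ vmax := fun i => Finset.le_sup' _ (Finset.mem_univ i)
  have hvmax_pos : 0 < vmax := lt_of_lt_of_le (hv_pos i0) (hvmax_ge i0)
  -- the Lyapunov coefficient functions
  set H : Fin n → ℝ → ℝ := fun j s => (∑ i, v i * d i j s) * g j s with hH_def
  have hHcont : ∀ j, Continuous (H j) := by
    intro j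
    exact ((continuous_finset_sum _ fun i _ =>
      continuous_const.mul (hd_smooth i j).continuous).mul (hg_smooth j).continuous)
  have hH0 : ∀ j, ρ' * v j < H j 0 := by
    intro j
    have h1 : H j 0 = ∑ i, A0 i j * v i := by
      rw [hH_def]
      simp only [Finset.sum_mul]
      refine Finset.sum_congr rfl fun i _ => ?_
      rw [hA0]; ring
    have h2 := hv j
    have h3 : ρ' * v j < ρ * v j := by
      exact mul_lt_mul_of_pos_right hρ'ρ (hv_pos j)
    rw [h1]; linarith
  -- a small threshold s₀ below which the Lyapunov function grows
  have hall : ∀ᶠ s in nhds (0 : ℝ), ∀ j, ρ' * v j < H j s := by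
    rw [Filter.eventually_all]
    intro j
    exact (isOpen_lt continuous_const (hHcont j)).mem_nhds (hH0 j)
  obtain ⟨δ₀, hδ₀pos, hδ₀⟩ := Metric.eventually_nhds_iff.mp hall
  set s₀ : ℝ := δ₀ / 2 with hs₀def
  have hs₀pos : 0 < s₀ := by positivity
  have hs₀ : ∀ s : ℝ, 0 ≤ s → s ≤ s₀ → ∀ j, ρ' * v j < H j s := by
    intro s hs hss j
    refine hδ₀ ?_ j
    rw [Real.dist_eq, sub_zero, abs_of_nonneg hs]
    calc s ≤ s₀ := hss
      _ < δ₀ := by rw [hs₀def]; linarith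
  -- box bound
  set M : ℝ := ∑ j, m j with hM_def
  have hM_nonneg : 0 ≤ M := Finset.sum_nonneg fun j _ => hm_nonneg j
  have hF_nonneg : ∀ x : Fin n → ℝ, (∀ i, 0 ≤ x i) → ∀ i, 0 ≤ F x i := by
    intro x hx i
    rw [hF]
    exact Finset.sum_nonneg fun j _ => mul_nonneg (hd_pos i j _ (hx j)).le
      (mul_nonneg (hg_pos j _ (hx j)).le (hx j))
  have hF_le : ∀ x : Fin n → ℝ, (∀ i, 0 ≤ x i) → ∀ i, F x i ≤ M := by
    intro x hx i
    rw [hF, hM_def]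
    refine Finset.sum_le_sum fun j _ => ?_
    calc d i j (x j) * (g j (x j) * x j) ≤ 1 * (g j (x j) * x j) := by
          refine mul_le_mul_of_nonneg_right (hd_lt1 i j _ (hx j)).le
            (mul_nonneg (hg_pos j _ (hx j)).le (hx j))
      _ = g j (x j) * x j := one_mul _
      _ ≤ m j := hf_bdd j _ (hx j)
  have hF_pos : ∀ x : Fin n → ℝ, (∀ i, 0 ≤ x i) → x ≠ 0 → ∀ i, 0 < F x i := by
    intro x hx hx0 i
    obtain ⟨k, hk⟩ : ∃ k, x k ≠ 0 := by
      by_contra hc; push_neg at hc; exact hx0 (funext fun j => hc j)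
    have hkpos : 0 < x k := lt_of_le_of_ne (hx k) (Ne.symm hk)
    rw [hF]
    refine Finset.sum_pos' (fun j _ => mul_nonneg (hd_pos i j _ (hx j)).le
      (mul_nonneg (hg_pos j _ (hx j)).le (hx j))) ⟨k, Finset.mem_univ k, ?_⟩
    exact mul_pos (hd_pos i k _ (hx k)) (mul_pos (hg_pos k _ (hx k)) hkpos)
  -- a uniform positive lower bound on d*g over the box
  have hc_ex : ∀ p : Fin n × Fin n, ∃ cp : ℝ, 0 < cp ∧
      ∀ s : ℝ, 0 ≤ s → s ≤ M → cp ≤ d p.1 p.2 s * g p.2 s := by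
    intro p
    have hcont : ContinuousOn (fun s => d p.1 p.2 s * g p.2 s) (Set.Icc 0 M) :=
      ((hd_smooth p.1 p.2).continuous.mul (hg_smooth p.2).continuous).continuousOn
    obtain ⟨s', hs'mem, hmin⟩ := isCompact_Icc.exists_isMinOn
      (Set.nonempty_Icc.mpr hM_nonneg) hcont
    refine ⟨d p.1 p.2 s' * g p.2 s',
      mul_pos (hd_pos p.1 p.2 s' hs'mem.1) (hg_pos p.2 s' hs'mem.1), fun s hs hsM => ?_⟩
    exact hmin (Set.mem_Icc.mpr ⟨hs, hsM⟩)
  choose cp hcp_pos hcp using hc_ex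
  have hneP : (Finset.univ : Finset (Fin n × Fin n)).Nonempty := ⟨(i0, i0), Finset.mem_univ _⟩
  set c : ℝ := Finset.univ.inf' hneP cp with hc_def
  have hc_pos : 0 < c := (Finset.lt_inf'_iff hneP).mpr fun p _ => hcp_pos p
  have hc_le : ∀ i j, ∀ s : ℝ, 0 ≤ s → s ≤ M → c ≤ d i j s * g j s := by
    intro i j s hs hsM
    exact le_trans (Finset.inf'_le _ (Finset.mem_univ (i, j))) (hcp (i, j) s hs hsM)
  -- the Lyapunov function
  set V : (Fin n → ℝ) → ℝ := fun x => ∑ j, v j * x j with hV_def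
  have hV_nonneg : ∀ x : Fin n → ℝ, (∀ i, 0 ≤ x i) → 0 ≤ V x := by
    intro x hx
    exact Finset.sum_nonneg fun j _ => mul_nonneg (hv_pos j).le (hx j)
  have hV_le : ∀ x : Fin n → ℝ, (∀ i, 0 ≤ x i) → V x ≤ vmax * ∑ j, x j := by
    intro x hx
    rw [hV_def, Finset.mul_sum]
    exact Finset.sum_le_sum fun j _ => mul_le_mul_of_nonneg_right (hvmax_ge j) (hx j)
  -- component lower bound on F in the box
  set ε0 : ℝ := c / vmax with hε0_def
  have hε0_pos : 0 < ε0 := by positivity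
  have hFgeV : ∀ x : Fin n → ℝ, (∀ i, 0 ≤ x i ∧ x i ≤ M) → ∀ i, ε0 * V x ≤ F x i := by
    intro x hx i
    have h1 : c * ∑ j, x j ≤ F x i := by
      rw [hF, Finset.mul_sum]
      refine Finset.sum_le_sum fun j _ => ?_
      have := hc_le i j (x j) (hx j).1 (hx j).2
      calc c * x j ≤ (d i j (x j) * g j (x j)) * x j :=
            mul_le_mul_of_nonneg_right this (hx j).1
        _ = d i j (x j) * (g j (x j) * x j) := by ring
    have h2 : ε0 * V x ≤ ε0 * (vmax * ∑ j, x j) :=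
      mul_le_mul_of_nonneg_left (hV_le x fun i => (hx i).1) hε0_pos.le
    have h3 : ε0 * (vmax * ∑ j, x j) = c * ∑ j, x j := by
      rw [hε0_def]; field_simp
    linarith
  -- κ contraction bound
  set κ0 : ℝ := ε0 * ∑ i, v i with hκ0_def
  have hκ0_pos : 0 < κ0 :=
    mul_pos hε0_pos (Finset.sum_pos (fun i _ => hv_pos i) hne)
  set κ : ℝ := min κ0 1 with hκ_def
  have hκ_pos : 0 < κ := lt_min hκ0_pos one_pos
  have hκ_le1 : κ ≤ 1 := min_le_right _ _
  have hκstep : ∀ x : Fin n → ℝ, (∀ i, 0 ≤ x i ∧ x i ≤ M) → κ * V x ≤ V (F x) := by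
    intro x hx
    have h1 : κ0 * V x ≤ V (F x) := by
      have : ∀ i, v i * (ε0 * V x) ≤ v i * F x i := fun i =>
        mul_le_mul_of_nonneg_left (hFgeV x hx i) (hv_pos i).le
      calc κ0 * V x = ∑ i, v i * (ε0 * V x) := by
            rw [hκ0_def, ← Finset.sum_mul]; ring
        _ ≤ ∑ i, v i * F x i := Finset.sum_le_sum fun i _ => this i
        _ = V (F x) := rfl
    have h2 : κ * V x ≤ κ0 * V x :=
      mul_le_mul_of_nonneg_right (min_le_left _ _) (hV_nonneg x fun i => (hx i).1)
    linarith
  -- growth near zero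
  set δ : ℝ := s₀ * vmin with hδ_def
  have hδ_pos : 0 < δ := mul_pos hs₀pos hvmin_pos
  have hgrow : ∀ x : Fin n → ℝ, (∀ i, 0 ≤ x i) → V x ≤ δ → ρ' * V x ≤ V (F x) := by
    intro x hx hVx
    have hxs : ∀ j, x j ≤ s₀ := by
      intro j
      have h1 : v j * x j ≤ V x := by
        rw [hV_def]
        exact Finset.single_le_sum (fun i _ => mul_nonneg (hv_pos i).le (hx i))
          (Finset.mem_univ j)
      have h2 : v j * x j ≤ s₀ * vmin := le_trans h1 (by rwa [hδ_def] at hVx)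
      have h3 : s₀ * vmin ≤ s₀ * v j := mul_le_mul_of_nonneg_left (hvmin_le j) hs₀pos.le
      have h4 : v j * x j ≤ v j * s₀ := by nlinarith
      exact le_of_mul_le_mul_left (by linarith) (hv_pos j)
    have hexp : V (F x) = ∑ j, H j (x j) * x j := by
      calc V (F x) = ∑ i, v i * ∑ j, d i j (x j) * (g j (x j) * x j) := by
            refine Finset.sum_congr rfl fun i _ => by rw [hF]
        _ = ∑ i, ∑ j, v i * (d i j (x j) * (g j (x j) * x j)) := by
            refine Finset.sum_congr rfl fun i _ => Finset.mul_sum _ _ _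
        _ = ∑ j, ∑ i, v i * (d i j (x j) * (g j (x j) * x j)) := Finset.sum_comm
        _ = ∑ j, H j (x j) * x j := by
            refine Finset.sum_congr rfl fun j _ => ?_
            rw [hH_def]
            simp only [Finset.sum_mul]
            refine Finset.sum_congr rfl fun i _ => by ring
    rw [hexp]
    calc ρ' * V x = ∑ j, (ρ' * v j) * x j := by
          rw [hV_def, Finset.mul_sum]
          refine Finset.sum_congr rfl fun j _ => by ring
      _ ≤ ∑ j, H j (x j) * x j := by
          refine Finset.sum_le_sum fun j _ => ?_
          exact mul_le_mul_of_nonneg_right (hs₀ (x j) (hx j) (hxs j) j).le (hx j)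
  -- the final ε
  refine ⟨ε0 * (κ * δ), by positivity, ?_⟩
  intro x₀ hx₀nn hx₀ne
  set x : ℕ → (Fin n → ℝ) := fun t => F^[t] x₀ with hx_def
  have hstep : ∀ t, x (t + 1) = F (x t) := by
    intro t
    rw [hx_def]
    exact Function.iterate_succ_apply' F t x₀
  have hxnn : ∀ t, ∀ i, 0 ≤ x t i := by
    intro t
    induction t with
    | zero => exact hx₀nn
    | succ t ih => rw [hstep]; exact hF_nonneg _ ih
  have hxne : ∀ t, x t ≠ 0 := by
    intro t
    induction t with
    | zero => exact hx₀ne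
    | succ t ih =>
        rw [hstep]
        intro hc
        exact absurd (congrFun hc i0) (ne_of_gt (hF_pos _ (hxnn t) ih i0))
  have hbox : ∀ t, ∀ i, 0 ≤ x (t + 1) i ∧ x (t + 1) i ≤ M := by
    intro t i
    rw [hstep]
    exact ⟨hF_nonneg _ (hxnn t) i, hF_le _ (hxnn t) i⟩
  have hVpos : ∀ t, 0 < V (x (t + 1)) := by
    intro t
    have : ∀ i, 0 < x (t + 1) i := by
      intro i; rw [hstep]; exact hF_pos _ (hxnn t) (hxne t) i
    exact Finset.sum_pos (fun j _ => mul_pos (hv_pos j) (this j)) hne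
  have hκs : ∀ t, κ * V (x (t + 1)) ≤ V (x (t + 2)) := by
    intro t
    have := hκstep (x (t + 1)) (hbox t)
    rwa [← hstep (t + 1)] at this
  have hρs : ∀ t, V (x t) ≤ δ → ρ' * V (x t) ≤ V (x (t + 1)) := by
    intro t h
    have := hgrow (x t) (hxnn t) h
    rwa [← hstep t] at this
  -- find a time where V is at least κ * δ
  have hT : ∃ T, κ * δ ≤ V (x (T + 1)) := by
    by_contra hcon
    push_neg at hcon
    have hκδδ : κ * δ ≤ δ := by
      have := mul_le_of_le_one_left hδ_pos.le hκ_le1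
      linarith
    have hgeo : ∀ k : ℕ, ρ' ^ k * V (x 1) ≤ V (x (k + 1)) := by
      intro k
      induction k with
      | zero => simp
      | succ k ih =>
          have h1 : V (x (k + 1)) ≤ δ := le_trans (hcon k).le hκδδ
          have h2 := hρs (k + 1) h1
          have h3 : ρ' * (ρ' ^ k * V (x 1)) ≤ ρ' * V (x (k + 1)) :=
            mul_le_mul_of_nonneg_left ih (by linarith)
          calc ρ' ^ (k + 1) * V (x 1) = ρ' * (ρ' ^ k * V (x 1)) := by ring
            _ ≤ ρ' * V (x (k + 1)) := h3
            _ ≤ V (x (k + 2)) := h2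
    obtain ⟨k, hk⟩ := pow_unbounded_of_one_lt (δ / V (x 1)) hρ'1
    have h5 : δ < ρ' ^ k * V (x 1) := by
      have h4 := mul_lt_mul_of_pos_right hk (hVpos 0)
      rwa [div_mul_cancel₀ _ (hVpos 0).ne'] at h4
    have h6 := hgeo k
    have h7 := hcon k
    linarith
  obtain ⟨T, hT⟩ := hT
  -- invariance
  have hinv : ∀ t, T + 1 ≤ t → κ * δ ≤ V (x t) := by
    intro t ht
    induction t, ht using Nat.le_induction with
    | base => exact hT
    | succ t ht ih =>
        by_cases hle : V (x t) ≤ δ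
        · have h1 := hρs t hle
          have h2 : 0 ≤ V (x t) := hV_nonneg _ (hxnn t)
          have h3 : V (x t) ≤ ρ' * V (x t) := le_mul_of_one_le_left h2 hρ'1.le
          linarith
        · have hle := not_le.mp hle
          obtain ⟨s, rfl⟩ : ∃ s, t = s + 1 :=
            ⟨t - 1, by omega⟩
          have h1 := hκs s
          have h2 : κ * δ ≤ κ * V (x (s + 1)) :=
            mul_le_mul_of_nonneg_left (by linarith) hκ_pos.le
          linarith
  -- eventual component lower bound
  have hfinal : ∀ t, T + 2 ≤ t → ∀ i, ε0 * (κ * δ) ≤ x t i := by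
    intro t ht i
    obtain ⟨s, rfl⟩ : ∃ s, t = s + 1 := ⟨t - 1, by omega⟩
    have hs1 : T + 1 ≤ s := by omega
    obtain ⟨r, rfl⟩ : ∃ r, s = r + 1 := ⟨s - 1, by omega⟩
    have h1 : ε0 * V (x (r + 1)) ≤ F (x (r + 1)) i := hFgeV _ (hbox r) i
    have h2 : κ * δ ≤ V (x (r + 1)) := hinv _ hs1
    have h3 : ε0 * (κ * δ) ≤ ε0 * V (x (r + 1)) :=
      mul_le_mul_of_nonneg_left h2 hε0_pos.le
    rw [hstep (r + 1)]
    linarith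
  -- conclude via liminf
  have hev : ∀ᶠ t in Filter.atTop, ε0 * (κ * δ) ≤
      Finset.univ.inf' (Finset.univ_nonempty_iff.mpr (Fin.pos_iff_nonempty.mp hn))
        (fun i => F^[t] x₀ i) := by
    rw [Filter.eventually_atTop]
    exact ⟨T + 2, fun t ht => Finset.le_inf' _ _ fun i _ => hfinal t ht i⟩
  have hcb : Filter.IsCoboundedUnder (· ≥ ·) Filter.atTop
      (fun t : ℕ => Finset.univ.inf' (Finset.univ_nonempty_iff.mpr (Fin.pos_iff_nonempty.mp hn))
        (fun i => F^[t] x₀ i)) := by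
    refine Filter.isCoboundedUnder_ge_of_eventually_le Filter.atTop (x := M) ?_
    rw [Filter.eventually_atTop]
    refine ⟨1, fun t ht => ?_⟩
    obtain ⟨s, rfl⟩ : ∃ s, t = s + 1 := ⟨t - 1, by omega⟩
    refine le_trans (Finset.inf'_le _ (Finset.mem_univ i0)) ?_
    exact (hbox s i0).2
  exact Filter.le_liminf_of_le hcb hev
end
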